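/- arXiv:1702.01866 — 10 statements merged into one kernel-verified Lean document; each statement's English description precedes it below -/
import Mathlib

section
/- Let I be a set, I₊ ⊆ I a subset, and f : I → I a bijection such that f(I₊) ⊆ I₊, ⋃_{i∈ℤ} f^i(I₊) = I, and ⋂_{i∈ℤ} f^i(I₊) = ∅. Then for every i ∈ ℤ, the set I(f,i) := f^i(I₊) \ f^{i+1}(I₊) is a cross-section for the f-orbits of I; that is, for every x ∈ I there is exactly one element of I(f,i) of the form f^m(x) with m ∈ ℤ. -/
/-!
The sets `f^i(S)` decrease in `i`, exhaust everything and have empty intersection, so each `x`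
has a largest index `N` with `x ∈ f^N(S)`. Since `f^m(x) ∈ f^i(S)` iff `x ∈ f^(i-m)(S)`, the
point `f^m(x)` lies in `f^i(S) \ f^(i+1)(S)` exactly when `m = i - N`.
-/

open Set

section AntitoneSets

variable {α : Type*} {A : ℤ → Set α}

theorem Antitone.eq_of_mem_sdiff_succ (hA : Antitone A) {x : α} {m n : ℤ}
    (hm : x ∈ A m \ A (m + 1)) (hn : x ∈ A n \ A (n + 1)) : m = n := by
  by_contra hne
  rcases Ne.lt_or_gt hne with hlt | hlt
  · exact hm.2 (hA (Int.add_one_le_of_lt hlt) hn.1)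
  · exact hn.2 (hA (Int.add_one_le_of_lt hlt) hm.1)

theorem Antitone.existsUnique_mem_sdiff_succ (hA : Antitone A) {x : α}
    (hU : x ∈ ⋃ n, A n) (hI : x ∉ ⋂ n, A n) : ∃! n, x ∈ A n \ A (n + 1) := by
  have hbdd : ∃ b : ℤ, ∀ n, x ∈ A n → n ≤ b := by
    by_contra! hunbdd
    refine hI (mem_iInter.2 fun k => ?_)
    obtain ⟨n, hn, hkn⟩ := hunbdd k
    exact hA hkn.le hn
  obtain ⟨N, hN, hNmax⟩ := Int.exists_greatest_of_bdd hbdd (mem_iUnion.1 hU)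
  have hN' : x ∉ A (N + 1) := fun h => (hNmax _ h).not_gt (lt_add_one N)
  exact ⟨N, ⟨hN, hN'⟩, fun n hn => hA.eq_of_mem_sdiff_succ hn ⟨hN, hN'⟩⟩

end AntitoneSets

namespace Equiv.Perm

variable {α : Type*} (f : Perm α) (S : Set α)

theorem antitone_image_zpow (hS : f '' S ⊆ S) : Antitone fun i : ℤ => ⇑(f ^ i) '' S :=
  antitone_int_of_succ_le fun i => by
    rw [zpow_add_one, coe_mul, image_comp]
    exact image_mono hS

theorem zpow_apply_mem_image_zpow_iff (i m : ℤ) (x : α) :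
    (f ^ m) x ∈ ⇑(f ^ i) '' S ↔ x ∈ ⇑(f ^ (i - m)) '' S := by
  simp only [mem_image_equiv, ← inv_def, ← mul_apply, ← zpow_neg, ← zpow_add]
  ring_nf

end Equiv.Perm

/-- If `f` is a bijection of `I`, `S ⊆ I` with `f(S) ⊆ S`,
`⋃_{i ∈ ℤ} f^i(S) = I` and `⋂_{i ∈ ℤ} f^i(S) = ∅`, then for every `i ∈ ℤ` the set
`I(f,i) = f^i(S) \ f^{i+1}(S)` is a cross-section for the `f`-orbits of `I`:
every `x ∈ I` has exactly one element of its `f`-orbit inside `I(f,i)`. -/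
theorem crossSection_of_orbits {I : Type*} (S : Set I) (f : Equiv.Perm I)
    (h1 : ⇑f '' S ⊆ S)
    (h2 : (⋃ i : ℤ, ⇑(f ^ i) '' S) = Set.univ)
    (h3 : (⋂ i : ℤ, ⇑(f ^ i) '' S) = ∅) :
    ∀ i : ℤ, ∀ x : I,
      ∃! y : I, y ∈ (⇑(f ^ i) '' S) \ (⇑(f ^ (i + 1)) '' S) ∧ ∃ m : ℤ, (f ^ m) x = y := by
  intro i x
  have hshift : ∀ m : ℤ, (f ^ m) x ∈ (⇑(f ^ i) '' S) \ (⇑(f ^ (i + 1)) '' S) ↔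
      x ∈ (⇑(f ^ (i - m)) '' S) \ (⇑(f ^ (i - m + 1)) '' S) := fun m => by
    simp only [mem_sdiff, f.zpow_apply_mem_image_zpow_iff, sub_add_eq_add_sub]
  have hA := f.antitone_image_zpow S h1
  obtain ⟨N, hN, hNuniq⟩ := hA.existsUnique_mem_sdiff_succ (x := x) (h2 ▸ trivial)
    (h3 ▸ notMem_empty x)
  refine ⟨(f ^ (i - N)) x, ⟨(hshift _).2 (by rwa [sub_sub_cancel]), i - N, rfl⟩, ?_⟩
  rintro _ ⟨hy, m, rfl⟩
  rw [← hNuniq _ ((hshift m).1 hy), sub_sub_cancel]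
end

section
/- Let I be a set, I₊ ⊆ I a subset, and f, g : I → I two bijections, each satisfying: f(I₊) ⊆ I₊, ⋃_{i∈ℤ} f^i(I₊) = I, ⋂_{i∈ℤ} f^i(I₊) = ∅ (and the same three conditions for g), and suppose f∘g = g∘f. Then for any integers a, b > 0, the sets I(f,0), I(f,1), …, I(f,a−1), I(g,−b), I(g,−b+1), …, I(g,−1) are pairwise disjoint and their union is a cross-section for the orbits of the bijection f^a∘g^b on I. -/
/-!
Put `h = f^a g^b`. Then `h(S) ⊆ S`, and by commutativity `h^k(S) = f^{ak}(g^{bk}(S))` is squeezed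
between powers of `f` applied to `S`, so `h` inherits the two limit conditions from `f`. Hence every
`I(h,i)` is a cross-section for the `h`-orbits, in particular `I(h,0) = S \ h(S)`. This set splits
as `(S \ f^a(S)) ⊔ (f^a(S) \ h(S))`, and the second piece is `h(g^{-b}(S) \ S)`. Moving one piece
of a cross-section by a power of `h` gives again a cross-section, so
`(S \ f^a(S)) ∪ (g^{-b}(S) \ S)` is one; these two sets are the unions of the `I(f,i)`, `0 ≤ i < a`,
and of the `I(g,j)`, `-b ≤ j < 0`.
-/

open Equiv Set Function

/-- The set `I(f,i) = f^i(S) \ f^{i+1}(S)` for a bijection `f` of `I` and `S ⊆ I`. -/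
def crossSec {I : Type*} (f : Equiv.Perm I) (S : Set I) (i : ℤ) : Set I :=
  (⇑(f ^ i) '' S) \ (⇑(f ^ (i + 1)) '' S)

def IsCrossSection {I : Type*} (h : Perm I) (C : Set I) : Prop :=
  ∀ x, ∃! y, y ∈ C ∧ h.SameCycle x y

namespace Antitone

variable {α : Type*} {P : ℤ → Set α}

theorem biUnion_Ico_sdiff_succ (hP : Antitone P) {m n : ℤ} (hmn : m ≤ n) :
    ⋃ i ∈ Ico m n, P i \ P (i + 1) = P m \ P n := by
  refine subset_antisymm (iUnion₂_subset fun i hi => sdiff_subset_sdiff (hP hi.1) (hP hi.2)) ?_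
  induction n, hmn using Int.leInduction with
  | base => simp
  | succ n hmn ih =>
    rintro x ⟨hxm, hxn⟩
    by_cases hx : x ∈ P n
    · exact mem_biUnion ⟨hmn, lt_add_one n⟩ ⟨hx, hxn⟩
    · exact biUnion_mono (Ico_subset_Ico_right (by omega)) (fun _ _ => subset_rfl) (ih ⟨hxm, hx⟩)

theorem pairwise_disjoint_sdiff_succ (hP : Antitone P) :
    Pairwise (Disjoint on fun i => P i \ P (i + 1)) :=
  (pairwise_disjoint_on _).2 fun _ _ hij => disjoint_left.2 fun _ hi hj => hi.2 (hP hij hj.1)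

theorem exists_mem_sdiff_succ (hP : Antitone P) {x : α} (hU : x ∈ ⋃ i, P i)
    (hI : x ∉ ⋂ i, P i) : ∃ i, x ∈ P i \ P (i + 1) := by
  obtain ⟨m, hm⟩ := mem_iUnion.1 hU
  obtain ⟨n, hn⟩ : ∃ n, x ∉ P n := by simpa using hI
  have hmn : m ≤ n := le_of_not_ge fun hnm => hn (hP hnm hm)
  obtain ⟨i, -, hi⟩ := mem_iUnion₂.1 <| (hP.biUnion_Ico_sdiff_succ hmn).ge ⟨hm, hn⟩
  exact ⟨i, hi⟩

end Antitone

section CrossSec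

variable {I : Type*} {f : Perm I} {S : Set I}

theorem antitone_image_zpow (hS : f '' S ⊆ S) : Antitone fun i : ℤ => ⇑(f ^ i) '' S := by
  refine antitone_int_of_succ_le fun i => ?_
  rw [zpow_add_one, Perm.coe_mul, image_comp]
  exact image_mono hS

theorem image_zpow_subset (hS : f '' S ⊆ S) {i : ℤ} (hi : 0 ≤ i) : ⇑(f ^ i) '' S ⊆ S := by
  simpa using antitone_image_zpow hS hi

theorem subset_image_zpow (hS : f '' S ⊆ S) {i : ℤ} (hi : i ≤ 0) : S ⊆ ⇑(f ^ i) '' S := by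
  simpa using antitone_image_zpow hS hi

theorem image_zpow_crossSec (m i : ℤ) : ⇑(f ^ m) '' crossSec f S i = crossSec f S (m + i) := by
  simp only [crossSec, image_sdiff (f ^ m).injective, ← image_comp, ← Perm.coe_mul, ← zpow_add,
    add_assoc]

theorem crossSec_zero : crossSec f S 0 = S \ f '' S := by
  simp [crossSec]

theorem biUnion_Ico_crossSec (hS : f '' S ⊆ S) {m n : ℤ} (hmn : m ≤ n) :
    ⋃ i ∈ Ico m n, crossSec f S i = ⇑(f ^ m) '' S \ ⇑(f ^ n) '' S :=
  (antitone_image_zpow hS).biUnion_Ico_sdiff_succ hmn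

theorem pairwise_disjoint_crossSec (hS : f '' S ⊆ S) : Pairwise (Disjoint on crossSec f S) :=
  (antitone_image_zpow hS).pairwise_disjoint_sdiff_succ

end CrossSec

section IsCrossSection

variable {I : Type*} {h : Perm I}

theorem isCrossSection_iff {C : Set I} :
    IsCrossSection h C ↔
      (∀ x, ∃ y ∈ C, h.SameCycle x y) ∧ ∀ y₁ ∈ C, ∀ y₂ ∈ C, h.SameCycle y₁ y₂ → y₁ = y₂ := by
  refine ⟨fun H => ⟨fun x => ?_, fun y₁ h₁ y₂ h₂ h₁₂ => ?_⟩, fun ⟨hex, huniq⟩ x => ?_⟩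
  · obtain ⟨y, ⟨hy, hxy⟩, -⟩ := H x
    exact ⟨y, hy, hxy⟩
  · exact (H y₁).unique ⟨h₁, Perm.SameCycle.refl _ _⟩ ⟨h₂, h₁₂⟩
  · obtain ⟨y, hy, hxy⟩ := hex x
    exact ⟨y, ⟨hy, hxy⟩, fun y' ⟨hy', hxy'⟩ => (huniq y hy y' hy' (hxy.symm.trans hxy')).symm⟩

theorem isCrossSection_crossSec {S : Set I} (hS : h '' S ⊆ S)
    (hU : ⋃ i : ℤ, ⇑(h ^ i) '' S = univ) (hI : ⋂ i : ℤ, ⇑(h ^ i) '' S = ∅) (i : ℤ) :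
    IsCrossSection h (crossSec h S i) := by
  refine isCrossSection_iff.2 ⟨fun x => ?_, ?_⟩
  · obtain ⟨j, hj⟩ := (antitone_image_zpow hS).exists_mem_sdiff_succ (hU ▸ mem_univ x)
      (hI ▸ notMem_empty x)
    refine ⟨(h ^ (i - j)) x, ?_, i - j, rfl⟩
    have hij := image_zpow_crossSec (f := h) (S := S) (i - j) j
    rw [sub_add_cancel] at hij
    exact hij ▸ mem_image_of_mem _ hj
  · rintro y h₁ _ h₂ ⟨m, rfl⟩
    have hm : (h ^ m) y ∈ crossSec h S (m + i) := image_zpow_crossSec m i ▸ mem_image_of_mem _ h₁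
    obtain rfl : m = 0 := by
      by_contra hm0
      exact disjoint_left.1 (pairwise_disjoint_crossSec hS (by omega : m + i ≠ i)) hm h₂
    simp

theorem IsCrossSection.union_of_union_zpow_image {A B : Set I} {k : ℤ}
    (hC : IsCrossSection h (A ∪ ⇑(h ^ k) '' B)) (hAB : Disjoint A (⇑(h ^ k) '' B)) :
    IsCrossSection h (A ∪ B) := by
  obtain ⟨hex, huniq⟩ := isCrossSection_iff.1 hC
  have hmixed : ∀ y₁ ∈ A, ∀ y₂ ∈ B, ¬ h.SameCycle y₁ y₂ := fun y₁ h₁ y₂ h₂ h₁₂ =>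
    disjoint_left.1 hAB h₁ <| (huniq y₁ (.inl h₁) _ (.inr (mem_image_of_mem _ h₂))
      (Perm.sameCycle_zpow_right.2 h₁₂)) ▸ mem_image_of_mem _ h₂
  refine isCrossSection_iff.2 ⟨fun x => ?_, ?_⟩
  · obtain ⟨y, hy | ⟨b, hb, rfl⟩, hxy⟩ := hex x
    · exact ⟨y, .inl hy, hxy⟩
    · exact ⟨b, .inr hb, Perm.sameCycle_zpow_right.1 hxy⟩
  · rintro y₁ (h₁ | h₁) y₂ (h₂ | h₂) h₁₂
    · exact huniq y₁ (.inl h₁) y₂ (.inl h₂) h₁₂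
    · exact (hmixed y₁ h₁ y₂ h₂ h₁₂).elim
    · exact (hmixed y₂ h₂ y₁ h₁ h₁₂.symm).elim
    · refine (h ^ k).injective (huniq _ (.inr (mem_image_of_mem _ h₁)) _
        (.inr (mem_image_of_mem _ h₂)) ?_)
      exact Perm.sameCycle_zpow_left.2 (Perm.sameCycle_zpow_right.2 h₁₂)

end IsCrossSection

section Product

variable {I : Type*} {f g : Perm I} {S : Set I} {a b : ℤ}

theorem image_zpow_mul_zpow (hcomm : Commute f g) (k : ℤ) :
    ⇑((f ^ a * g ^ b) ^ k) '' S = ⇑(f ^ (a * k)) '' (⇑(g ^ (b * k)) '' S) := by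
  rw [(hcomm.zpow_zpow a b).mul_zpow, zpow_mul, zpow_mul, Perm.coe_mul, image_comp]

theorem image_zpow_mul_zpow_subset (hcomm : Commute f g) (hg : g '' S ⊆ S) (hb : 0 ≤ b) {k : ℤ}
    (hk : 0 ≤ k) : ⇑((f ^ a * g ^ b) ^ k) '' S ⊆ ⇑(f ^ (a * k)) '' S := by
  rw [image_zpow_mul_zpow hcomm]
  exact image_mono (image_zpow_subset hg (mul_nonneg hb hk))

theorem subset_image_zpow_mul_zpow (hcomm : Commute f g) (hg : g '' S ⊆ S) (hb : 0 ≤ b) {k : ℤ}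
    (hk : k ≤ 0) : ⇑(f ^ (a * k)) '' S ⊆ ⇑((f ^ a * g ^ b) ^ k) '' S := by
  rw [image_zpow_mul_zpow hcomm]
  exact image_mono (subset_image_zpow hg (mul_nonpos_of_nonneg_of_nonpos hb hk))

theorem iUnion_image_zpow_mul_zpow (hf : f '' S ⊆ S) (hg : g '' S ⊆ S) (hcomm : Commute f g)
    (ha : 0 < a) (hb : 0 ≤ b) (hU : ⋃ i : ℤ, ⇑(f ^ i) '' S = univ) :
    ⋃ k : ℤ, ⇑((f ^ a * g ^ b) ^ k) '' S = univ := by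
  refine eq_univ_of_univ_subset <| hU ▸ iUnion_mono' fun i => ⟨min i 0, ?_⟩
  have hi : a * min i 0 ≤ i := by
    rcases le_total i 0 with h | h
    · rw [min_eq_left h]; nlinarith
    · rwa [min_eq_right h, mul_zero]
  exact (antitone_image_zpow hf hi).trans
    (subset_image_zpow_mul_zpow hcomm hg hb (min_le_right _ _))

theorem iInter_image_zpow_mul_zpow (hf : f '' S ⊆ S) (hg : g '' S ⊆ S) (hcomm : Commute f g)
    (ha : 0 < a) (hb : 0 ≤ b) (hI : ⋂ i : ℤ, ⇑(f ^ i) '' S = ∅) :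
    ⋂ k : ℤ, ⇑((f ^ a * g ^ b) ^ k) '' S = ∅ := by
  refine subset_empty_iff.1 <| hI ▸ iInter_mono' fun i => ⟨max i 0, ?_⟩
  have hi : i ≤ a * max i 0 := by
    rcases le_total i 0 with h | h
    · rwa [max_eq_right h, mul_zero]
    · rw [max_eq_left h]; nlinarith
  exact (image_zpow_mul_zpow_subset hcomm hg hb (le_max_right _ _)).trans
    (antitone_image_zpow hf hi)

theorem image_mul_image_inv_sdiff (p q : Perm I) (S : Set I) :
    ⇑(p * q) '' (⇑q⁻¹ '' S \ S) = ⇑p '' S \ ⇑(p * q) '' S := by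
  rw [image_sdiff (Equiv.injective _), ← image_comp, ← Perm.coe_mul, mul_inv_cancel_right]

end Product

theorem crossSection_of_product_general {I : Type*} (S : Set I) (f g : Equiv.Perm I)
    (hf1 : ⇑f '' S ⊆ S)
    (hf2 : (⋃ i : ℤ, ⇑(f ^ i) '' S) = Set.univ)
    (hf3 : (⋂ i : ℤ, ⇑(f ^ i) '' S) = ∅)
    (hg1 : ⇑g '' S ⊆ S)
    (hcomm : f * g = g * f)
    (a b : ℤ) (ha : 0 < a) (hb : 0 < b) :
    (∀ i ∈ Set.Ico (0 : ℤ) a, ∀ j ∈ Set.Ico (0 : ℤ) a, i ≠ j →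
        Disjoint (crossSec f S i) (crossSec f S j)) ∧
    (∀ i ∈ Set.Ico (-b) (0 : ℤ), ∀ j ∈ Set.Ico (-b) (0 : ℤ), i ≠ j →
        Disjoint (crossSec g S i) (crossSec g S j)) ∧
    (∀ i ∈ Set.Ico (0 : ℤ) a, ∀ j ∈ Set.Ico (-b) (0 : ℤ),
        Disjoint (crossSec f S i) (crossSec g S j)) ∧
    (∀ x : I, ∃! y : I,
        y ∈ ((⋃ i ∈ Set.Ico (0 : ℤ) a, crossSec f S i) ∪
              ⋃ j ∈ Set.Ico (-b) (0 : ℤ), crossSec g S j) ∧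
        ∃ m : ℤ, ((f ^ a * g ^ b) ^ m) x = y) := by
  set h := f ^ a * g ^ b
  have hfa : ⇑(f ^ a) '' S ⊆ S := image_zpow_subset hf1 ha.le
  have hhfa : ⇑h '' S ⊆ ⇑(f ^ a) '' S := by
    simpa only [zpow_one, mul_one] using
      image_zpow_mul_zpow_subset (a := a) (S := S) hcomm hg1 hb.le zero_le_one
  have hD : IsCrossSection h ((S \ ⇑(f ^ a) '' S) ∪ ⇑(h ^ (1 : ℤ)) '' (⇑(g ^ b)⁻¹ '' S \ S)) := by
    rw [zpow_one, image_mul_image_inv_sdiff, sdiff_union_sdiff_cancel hfa hhfa, ← crossSec_zero]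
    exact isCrossSection_crossSec (hhfa.trans hfa)
      (iUnion_image_zpow_mul_zpow hf1 hg1 hcomm ha hb.le hf2)
      (iInter_image_zpow_mul_zpow hf1 hg1 hcomm ha hb.le hf3) 0
  refine ⟨fun i _ j _ hij => pairwise_disjoint_crossSec hf1 hij,
    fun i _ j _ hij => pairwise_disjoint_crossSec hg1 hij, fun i hi j ⟨_, hj⟩ => ?_, ?_⟩
  · exact disjoint_left.2 fun x hxf hxg =>
      hxg.2 (subset_image_zpow hg1 (by omega : j + 1 ≤ 0) (image_zpow_subset hf1 hi.1 hxf.1))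
  · rw [biUnion_Ico_crossSec hf1 ha.le, biUnion_Ico_crossSec hg1 (neg_nonpos.2 hb.le), zpow_neg]
    simp only [zpow_zero, Perm.coe_one, image_id]
    refine hD.union_of_union_zpow_image ?_
    rw [zpow_one, image_mul_image_inv_sdiff]
    exact disjoint_sdiff_left.mono_right sdiff_subset

/-- Let `f, g` be commuting bijections of `I`, each satisfying
`h(S) ⊆ S`, `⋃_{i∈ℤ} h^i(S) = I`, `⋂_{i∈ℤ} h^i(S) = ∅`.  Then for `a, b > 0` the sets
`I(f,0), …, I(f,a−1), I(g,−b), …, I(g,−1)` are pairwise disjoint, and their union is a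
cross-section for the orbits of `f^a ∘ g^b` on `I`. -/
theorem crossSection_of_product {I : Type*} (S : Set I) (f g : Equiv.Perm I)
    (hf1 : ⇑f '' S ⊆ S)
    (hf2 : (⋃ i : ℤ, ⇑(f ^ i) '' S) = Set.univ)
    (hf3 : (⋂ i : ℤ, ⇑(f ^ i) '' S) = ∅)
    (hg1 : ⇑g '' S ⊆ S)
    (hg2 : (⋃ i : ℤ, ⇑(g ^ i) '' S) = Set.univ)
    (hg3 : (⋂ i : ℤ, ⇑(g ^ i) '' S) = ∅)
    (hcomm : f * g = g * f)
    (a b : ℤ) (ha : 0 < a) (hb : 0 < b) :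
    (∀ i ∈ Set.Ico (0 : ℤ) a, ∀ j ∈ Set.Ico (0 : ℤ) a, i ≠ j →
        Disjoint (crossSec f S i) (crossSec f S j)) ∧
    (∀ i ∈ Set.Ico (-b) (0 : ℤ), ∀ j ∈ Set.Ico (-b) (0 : ℤ), i ≠ j →
        Disjoint (crossSec g S i) (crossSec g S j)) ∧
    (∀ i ∈ Set.Ico (0 : ℤ) a, ∀ j ∈ Set.Ico (-b) (0 : ℤ),
        Disjoint (crossSec f S i) (crossSec g S j)) ∧
    (∀ x : I, ∃! y : I,
        y ∈ ((⋃ i ∈ Set.Ico (0 : ℤ) a, crossSec f S i) ∪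
              ⋃ j ∈ Set.Ico (-b) (0 : ℤ), crossSec g S j) ∧
        ∃ m : ℤ, ((f ^ a * g ^ b) ^ m) x = y) :=
  crossSection_of_product_general S f g hf1 hf2 hf3 hg1 hcomm a b ha hb
end

section
/- Let X be a set and let σ, φ : X → X be bijections with σ∘φ = φ∘σ. Suppose that φ^i(x) ≠ x for every x ∈ X and every integer i ≥ 1, and that the number of σ-orbits of X is finite. Then the number of φ-orbits of X is finite. -/
/-!
Since `φ` commutes with `σ`, it permutes the finitely many `σ`-orbits, so some power
`ψ = φ ^ N` with `N ≥ 1` maps each `σ`-orbit to itself. On the `σ`-orbit of `x`, `ψ` then acts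
as `σ ^ k` for the `k` with `ψ x = σ ^ k x`, and `k ≠ 0` because `ψ` has no fixed point; so this
orbit is the union of at most `|k|` orbits of `ψ`. Hence `ψ` has finitely many orbits, and every
`φ`-orbit is a union of `ψ`-orbits.
-/

open MulAction Subgroup

namespace Equiv.Perm

variable {α : Type*} {f g σ ψ : Perm α} {x y : α}

theorem orbitRel_zpowers_apply (f : Perm α) (x y : α) :
    orbitRel (zpowers f) α x y ↔ f.SameCycle x y := by
  rw [sameCycle_comm]
  constructor
  · rintro ⟨⟨_, n, rfl⟩, rfl⟩
    exact ⟨n, rfl⟩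
  · rintro ⟨n, rfl⟩
    exact ⟨⟨f ^ n, n, rfl⟩, rfl⟩

theorem finite_orbitRel_zpowers_quotient_iff (f : Perm α) :
    Finite (orbitRel.Quotient (zpowers f) α) ↔ Finite (Quotient (SameCycle.setoid f)) :=
  (Quotient.congrRight (orbitRel_zpowers_apply f)).finite_iff

theorem SameCycle.apply_of_commute (hfg : Commute f g) (h : f.SameCycle x y) :
    f.SameCycle (g x) (g y) := by
  have := h.conj (g := g)
  rwa [← eq_mul_inv_of_mul_eq hfg.eq] at this

theorem exists_pow_sameCycle_of_commute [Finite (Quotient (SameCycle.setoid σ))]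
    (h : Commute σ g) : ∃ N, 0 < N ∧ ∀ x, σ.SameCycle x ((g ^ N) x) := by
  let F (n : ℕ) : Quotient (SameCycle.setoid σ) → Quotient (SameCycle.setoid σ) :=
    Quotient.map ⇑(g ^ n) fun _ _ => SameCycle.apply_of_commute (h.pow_right n)
  obtain ⟨a, b, hab, hF⟩ :=
    Set.finite_univ.exists_lt_map_eq_of_forall_mem (f := F) fun _ => Set.mem_univ _
  obtain ⟨N, rfl⟩ := Nat.exists_eq_add_of_lt hab
  refine ⟨N + 1, N.succ_pos, fun x => ?_⟩
  have hx : σ.SameCycle ((g ^ a) x) ((g ^ a) ((g ^ (N + 1)) x)) := by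
    rw [← mul_apply, ← pow_add]
    exact Quotient.exact (congrFun hF (Quotient.mk _ x))
  simpa using hx.apply_of_commute (h.pow_right a).inv_right

theorem zpow_apply_eq_zpow_apply_of_commute (hfg : Commute f g) (hx : f x = g x) (n : ℤ) :
    (f ^ n) x = (g ^ n) x := by
  have hfix : (g⁻¹ * f) x = x := by simp [hx]
  have := zpow_apply_eq_self_of_apply_eq_self hfix n
  rwa [hfg.symm.inv_left.mul_zpow, inv_zpow, mul_apply, inv_eq_iff_eq] at this

theorem sameCycle_zpow_emod_zpow (h : Commute σ ψ) {k : ℤ} (hx : ψ x = (σ ^ k) x) (m : ℤ) :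
    ψ.SameCycle ((σ ^ (m % k)) x) ((σ ^ m) x) := by
  refine ⟨m / k, ?_⟩
  have hψk : (ψ ^ (m / k)) x = (σ ^ (k * (m / k))) x := by
    rw [zpow_mul, zpow_apply_eq_zpow_apply_of_commute (h.zpow_left k).symm hx]
  conv_rhs => rw [← Int.emod_add_mul_ediv m k]
  rw [zpow_add, mul_apply, ← hψk, ← mul_apply, ← mul_apply, ((h.zpow_left _).zpow_right _).eq]

theorem finite_quotient_sameCycle_of_commute [Finite (Quotient (SameCycle.setoid σ))]
    (h : Commute σ ψ) (hσψ : ∀ x, σ.SameCycle x (ψ x)) (hψ : ∀ x, ψ x ≠ x) :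
    Finite (Quotient (SameCycle.setoid ψ)) := by
  choose k hk using hσψ
  have hk0 (x : α) : k x ≠ 0 := fun h0 => hψ x (by rw [← hk, h0, zpow_zero, one_apply])
  let rep (q : Quotient (SameCycle.setoid σ)) : α := q.out
  suffices hcover : ∀ c : Quotient (SameCycle.setoid ψ),
      c ∈ ⋃ q, (fun r : ℤ => Quotient.mk _ ((σ ^ r) (rep q))) '' Set.Ico 0 |k (rep q)| from
    Set.finite_univ_iff.mp <|
      (Set.finite_iUnion fun q => (Set.finite_Ico _ _).image _).subset fun c _ => hcover c
  rintro ⟨y⟩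
  obtain ⟨m, hm⟩ : σ.SameCycle (rep ⟦y⟧) y := Quotient.mk_out (s := SameCycle.setoid σ) y
  refine Set.mem_iUnion.mpr ⟨⟦y⟧, m % k (rep ⟦y⟧), ⟨Int.emod_nonneg _ (hk0 _),
    Int.emod_lt_abs _ (hk0 _)⟩, Quotient.sound ?_⟩
  exact (sameCycle_zpow_emod_zpow h (hk _).symm m).trans (by rw [hm])

theorem finite_quotient_sameCycle_of_pow (n : ℕ) [Finite (Quotient (SameCycle.setoid (f ^ n)))] :
    Finite (Quotient (SameCycle.setoid f)) :=
  Finite.of_surjective _ <| Quotient.map_surjective (sa := SameCycle.setoid (f ^ n))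
    (sb := SameCycle.setoid f) (f := id) (fun _ _ => SameCycle.of_pow) Function.surjective_id

end Equiv.Perm

open Equiv.Perm in
/-- Let `σ, φ` be commuting bijections of a set `X` such that
`φ^i(x) ≠ x` for all `x` and all integers `i ≥ 1`.  If the number of `σ`-orbits of `X`
is finite, then the number of `φ`-orbits of `X` is finite. -/
theorem finite_orbits_of_commuting {X : Type*} (σ φ : Equiv.Perm X)
    (hcomm : σ * φ = φ * σ)
    (hfree : ∀ (x : X) (i : ℤ), 1 ≤ i → (φ ^ i) x ≠ x)
    (hfin : Finite (MulAction.orbitRel.Quotient (Subgroup.zpowers σ) X)) :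
    Finite (MulAction.orbitRel.Quotient (Subgroup.zpowers φ) X) := by
  have hcomm : Commute σ φ := hcomm
  rw [finite_orbitRel_zpowers_quotient_iff] at hfin ⊢
  obtain ⟨N, hN, hσN⟩ := exists_pow_sameCycle_of_commute hcomm
  have hfreeN (x : X) : (φ ^ N) x ≠ x := by
    simpa using hfree x N (by exact_mod_cast hN)
  have := finite_quotient_sameCycle_of_commute (hcomm.pow_right N) hσN hfreeN
  exact finite_quotient_sameCycle_of_pow N
end

section
/- Let d ≥ 1 and ℓ ≥ 2 be integers, and set N = (d−1)ℓ + 2, r = gcd(d+1, ℓ−1), and t = gcd(d+1, 2(ℓ−1)). Then for every integer n, N divides n·r·(d−1) if and only if N divides n·t. -/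
/-! Writing `N = (d - 1)(ℓ - 1) + (d + 1)`, a common divisor of `N` divides `r (d - 1)` exactly when
it divides `d + 1`, and likewise for `t`; hence `gcd(N, r (d - 1))` and `gcd(N, t)` agree, and
`N ∣ n a` only depends on `gcd(N, a)`. -/

section GCDMonoid

variable {α : Type*}

theorem dvd_mul_iff_dvd_mul_of_forall_dvd_iff [CommMonoidWithZero α] [GCDMonoid α]
    {N a b : α} (h : ∀ g, g ∣ N → (g ∣ a ↔ g ∣ b)) (n : α) : N ∣ n * a ↔ N ∣ n * b := by
  have hab : Associated (gcd N a) (gcd N b) :=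
    associated_of_dvd_dvd
      (dvd_gcd (gcd_dvd_left N a) ((h _ (gcd_dvd_left N a)).1 (gcd_dvd_right N a)))
      (dvd_gcd (gcd_dvd_left N b) ((h _ (gcd_dvd_left N b)).2 (gcd_dvd_right N b)))
  rw [← dvd_mul_gcd_iff_dvd_mul, (hab.mul_left n).dvd_iff_dvd_right, dvd_mul_gcd_iff_dvd_mul]

theorem dvd_iff_dvd_of_dvd_add [NonUnitalRing α] {a b c : α} (h : a ∣ b + c) : a ∣ b ↔ a ∣ c :=
  ⟨fun hb => (dvd_add_right hb).1 h, fun hc => (dvd_add_left hc).1 h⟩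

variable [CommRing α] [GCDMonoid α] {g x y m : α}

theorem dvd_gcd_mul_iff_of_dvd_mul_add (hg : g ∣ y * m + x) : g ∣ gcd x m * y ↔ g ∣ x := by
  rw [← (gcd_mul_right' y x m).dvd_iff_dvd_right, dvd_gcd_iff, mul_comm m,
    dvd_iff_dvd_of_dvd_add hg]
  exact ⟨And.right, fun hx => ⟨hx.mul_right y, hx⟩⟩

theorem dvd_gcd_sub_mul_iff_of_dvd_mul_add (hg : g ∣ y * m + x) :
    g ∣ gcd x ((x - y) * m) ↔ g ∣ x := by
  rw [dvd_gcd_iff, sub_mul]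
  refine ⟨And.left, fun hx => ⟨hx, ?_⟩⟩
  rw [dvd_sub_right (hx.mul_right m), dvd_iff_dvd_of_dvd_add hg]
  exact hx

end GCDMonoid

theorem dvd_gcd_iff_dvd_gcd_general (d ℓ : ℤ)
    (N r t : ℤ) (hN : N = (d - 1) * ℓ + 2)
    (hr : r = Int.gcd (d + 1) (ℓ - 1))
    (ht : t = Int.gcd (d + 1) (2 * (ℓ - 1))) :
    ∀ n : ℤ, N ∣ n * r * (d - 1) ↔ N ∣ n * t := by
  have hN' : N = (d - 1) * (ℓ - 1) + (d + 1) := by rw [hN]; ring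
  have htwo : (2 : ℤ) = d + 1 - (d - 1) := by ring
  rw [Int.coe_gcd] at hr
  rw [Int.coe_gcd, htwo] at ht
  intro n
  rw [mul_assoc, hr, ht]
  refine dvd_mul_iff_dvd_mul_of_forall_dvd_iff (fun g hg => ?_) n
  rw [hN'] at hg
  rw [dvd_gcd_mul_iff_of_dvd_mul_add hg, dvd_gcd_sub_mul_iff_of_dvd_mul_add hg]

/-- For integers `d ≥ 1`, `ℓ ≥ 2`, with `N = (d−1)ℓ + 2`,
`r = gcd(d+1, ℓ−1)` and `t = gcd(d+1, 2(ℓ−1))`, for every integer `n` one has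
`N ∣ n·r·(d−1)` iff `N ∣ n·t`. -/
theorem dvd_gcd_iff_dvd_gcd (d ℓ : ℤ) (hd : 1 ≤ d) (hl : 2 ≤ ℓ)
    (N r t : ℤ) (hN : N = (d - 1) * ℓ + 2)
    (hr : r = Int.gcd (d + 1) (ℓ - 1))
    (ht : t = Int.gcd (d + 1) (2 * (ℓ - 1))) :
    ∀ n : ℤ, N ∣ n * r * (d - 1) ↔ N ∣ n * t :=
  dvd_gcd_iff_dvd_gcd_general d ℓ N r t hN hr ht
end

section
/- Let d ≥ 1 and ℓ ≥ 2 be integers, and set N = (d−1)ℓ + 2 and r = gcd(d+1, ℓ−1). Then gcd(N, r·(d−1)) = gcd(d+1, 2(ℓ−1)). -/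
/-!
Since `r ∣ ℓ - 1`, the number `r (d - 1)` divides `N - (d + 1) = (ℓ - 1)(d - 1)`, so
`gcd(N, r (d - 1)) = gcd(d + 1, r (d - 1))`; as `r (d - 1) = r (d + 1) - 2r` this is
`gcd(d + 1, 2r)`. Finally `2r = gcd(2(d + 1), 2(ℓ - 1))`, and the multiple `2(d + 1)` of `d + 1`
drops out of `gcd(d + 1, gcd(2(d + 1), 2(ℓ - 1)))`.
-/

theorem Int.gcd_mul_gcd_right (a b k : ℤ) :
    Int.gcd a (k * Int.gcd a b) = Int.gcd a (k * b) := by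
  have hmul : (k.natAbs * Int.gcd a b : ℤ) = Int.gcd (k * a) (k * b) := by
    rw [Int.gcd_mul_left]; push_cast; rfl
  calc Int.gcd a (k * Int.gcd a b) = Int.gcd a (k.natAbs * Int.gcd a b) := by
        simp only [Int.gcd_eq_natAbs_gcd_natAbs, Int.natAbs_mul, Int.natAbs_natCast]
    _ = Int.gcd (Int.gcd a (k * a)) (k * b) := by rw [hmul, Int.gcd_assoc]
    _ = Int.gcd a (k * b) := by
        rw [Int.gcd_mul_left_right]
        simp only [Int.gcd_eq_natAbs_gcd_natAbs, Int.natAbs_natCast]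

theorem gcd_N_eq_gcd_general (d ℓ : ℤ)
    (N r : ℤ) (hN : N = (d - 1) * ℓ + 2)
    (hr : r = Int.gcd (d + 1) (ℓ - 1)) :
    Int.gcd N (r * (d - 1)) = Int.gcd (d + 1) (2 * (ℓ - 1)) := by
  have hN' : N = (d + 1) + (ℓ - 1) * (d - 1) := by rw [hN]; ring
  have hdvd : r * (d - 1) ∣ (ℓ - 1) * (d - 1) :=
    mul_dvd_mul_right (hr ▸ Int.gcd_dvd_right _ _) _
  calc Int.gcd N (r * (d - 1)) = Int.gcd (d + 1) (r * (d - 1)) := by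
        rw [hN', Int.gcd_add_right_left_of_dvd _ hdvd]
    _ = Int.gcd (d + 1) (r * (d + 1) - 2 * r) := by congr 1; ring
    _ = Int.gcd (d + 1) (2 * r) := Int.gcd_mul_right_sub_right _ _ _
    _ = Int.gcd (d + 1) (2 * (ℓ - 1)) := by rw [hr, Int.gcd_mul_gcd_right]

/-- For integers `d ≥ 1`, `ℓ ≥ 2`, with `N = (d−1)ℓ + 2` and
`r = gcd(d+1, ℓ−1)`, one has `gcd(N, r·(d−1)) = gcd(d+1, 2(ℓ−1))`. -/
theorem gcd_N_eq_gcd (d ℓ : ℤ) (hd : 1 ≤ d) (hl : 2 ≤ ℓ)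
    (N r : ℤ) (hN : N = (d - 1) * ℓ + 2)
    (hr : r = Int.gcd (d + 1) (ℓ - 1)) :
    Int.gcd N (r * (d - 1)) = Int.gcd (d + 1) (2 * (ℓ - 1)) :=
  gcd_N_eq_gcd_general d ℓ N r hN hr
end

section
/- Let d ≥ 1, ℓ ≥ 2 and n ≥ 1 be integers, and set N = (d−1)ℓ + 2 and q = N / gcd(N, n(d−1)). Then q divides gcd(d+1, ℓ−1) if and only if N divides n·gcd(d+1, 2(ℓ−1)). -/
/-!
Since `N = (d + 1) + (d - 1)(ℓ - 1)`, an integer `x (d - 1)(ℓ - 1)` is divisible by `N` exactly when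
`x (d + 1)` is. Both sides of the equivalence reduce to `N ∣ n (d + 1)`: the left one because
`N / gcd(N, a) ∣ m ↔ N ∣ a m`, the right one because `2 (ℓ - 1) = (d + 1)(ℓ - 1) - (d - 1)(ℓ - 1)`.
-/

theorem dvd_mul_gcd_iff {α : Type*} [CommMonoidWithZero α] [GCDMonoid α] {k : α} (c a b : α) :
    k ∣ c * gcd a b ↔ k ∣ c * a ∧ k ∣ c * b :=
  (gcd_mul_left' c a b).dvd_iff_dvd_right.symm.trans (dvd_gcd_iff _ _ _)

namespace Int

theorem dvd_mul_coe_gcd_iff {k : ℤ} (c a b : ℤ) :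
    k ∣ c * (Int.gcd a b : ℤ) ↔ k ∣ c * a ∧ k ∣ c * b := by
  rw [coe_gcd, dvd_mul_gcd_iff]

theorem ediv_gcd_dvd_iff_dvd_mul {N : ℤ} (hN : N ≠ 0) (a m : ℤ) :
    N / (Int.gcd N a : ℤ) ∣ m ↔ N ∣ a * m := by
  have hg : (Int.gcd N a : ℤ) ≠ 0 := by exact_mod_cast (Int.gcd_pos_of_ne_zero_left a hN).ne'
  rw [← mul_dvd_mul_iff_right hg, Int.ediv_mul_cancel (Int.gcd_dvd_left _ _),
    dvd_mul_gcd_iff_dvd_mul, mul_comm]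

theorem dvd_mul_mul_iff_dvd_mul_of_eq_add {N a b c : ℤ} (hN : N = a + b * c) (x : ℤ) :
    N ∣ x * (b * c) ↔ N ∣ x * a := by
  rw [show x * (b * c) = N * x - x * a by rw [hN]; ring, dvd_sub_right (dvd_mul_right N x)]

theorem dvd_mul_mul_coe_gcd_iff_of_eq_add {N a b c : ℤ} (hN : N = a + b * c) (x : ℤ) :
    N ∣ x * b * (Int.gcd a c : ℤ) ↔ N ∣ x * a := by
  rw [dvd_mul_coe_gcd_iff, mul_assoc, mul_assoc, dvd_mul_mul_iff_dvd_mul_of_eq_add hN]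
  exact ⟨And.right, fun h => ⟨by rw [mul_left_comm]; exact h.mul_left b, h⟩⟩

theorem dvd_mul_coe_gcd_two_mul_iff_of_eq_add {N a b c : ℤ} (hN : N = a + b * c)
    (hab : a = b + 2) (x : ℤ) :
    N ∣ x * (Int.gcd a (2 * c) : ℤ) ↔ N ∣ x * a := by
  rw [dvd_mul_coe_gcd_iff]
  refine ⟨And.left, fun h => ⟨h, ?_⟩⟩
  have hbc : N ∣ x * (b * c) := (dvd_mul_mul_iff_dvd_mul_of_eq_add hN x).mpr h
  rw [show x * (2 * c) = x * a * c - x * (b * c) by rw [hab]; ring]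
  exact (h.mul_right c).sub hbc

end Int

theorem q_dvd_iff_N_dvd_general (d ℓ n : ℤ) (hd : 1 ≤ d) (hl : 2 ≤ ℓ)
    (N q : ℤ) (hN : N = (d - 1) * ℓ + 2)
    (hq : q = N / (Int.gcd N (n * (d - 1)) : ℤ)) :
    q ∣ (Int.gcd (d + 1) (ℓ - 1) : ℤ) ↔ N ∣ n * (Int.gcd (d + 1) (2 * (ℓ - 1)) : ℤ) := by
  have hN_pos : 0 < N := by
    rw [hN]; nlinarith
  have hN_split : N = d + 1 + (d - 1) * (ℓ - 1) := by rw [hN]; ring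
  rw [hq, Int.ediv_gcd_dvd_iff_dvd_mul hN_pos.ne', Int.dvd_mul_mul_coe_gcd_iff_of_eq_add hN_split,
    Int.dvd_mul_coe_gcd_two_mul_iff_of_eq_add hN_split (by ring)]

/-- For integers `d ≥ 1`, `ℓ ≥ 2`, `n ≥ 1`, with `N = (d−1)ℓ + 2` and
`q = N / gcd(N, n(d−1))`, one has `q ∣ gcd(d+1, ℓ−1)` iff `N ∣ n·gcd(d+1, 2(ℓ−1))`. -/
theorem q_dvd_iff_N_dvd (d ℓ n : ℤ) (hd : 1 ≤ d) (hl : 2 ≤ ℓ) (hn : 1 ≤ n)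
    (N q : ℤ) (hN : N = (d - 1) * ℓ + 2)
    (hq : q = N / (Int.gcd N (n * (d - 1)) : ℤ)) :
    q ∣ (Int.gcd (d + 1) (ℓ - 1) : ℤ) ↔ N ∣ n * (Int.gcd (d + 1) (2 * (ℓ - 1)) : ℤ) :=
  q_dvd_iff_N_dvd_general d ℓ n hd hl N q hN hq
end

section
/- Fix integers d ≥ 2, ℓ ≥ 2 and n ≥ 1, set N = (d−1)ℓ + 2 and t = gcd(d+1, 2(ℓ−1)). There exists a (d+1)-angulation 𝒯 of P_N with ρ^{n(d−1)}(𝒯) = 𝒯 if and only if N divides 2n or N divides t·n. -/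
/-- `z` lies strictly inside the open clockwise cyclic arc from `a` to `b` in `ℤ/Nℤ`. -/
def InArc (N : ℕ) (a b z : ZMod N) : Prop :=
  0 < (z - a).val ∧ (z - a).val < (b - a).val

/-- `{x, y}` is a `(d−1)`-diagonal of the `N`-gon: the representative
`m ∈ {1, …, N−1}` of `y − x` satisfies `2 ≤ m ≤ N−2` and `m ≡ 1 (mod d−1)`. -/
def IsDiag (d N : ℕ) (p : Sym2 (ZMod N)) : Prop :=
  ∃ x y : ZMod N, p = s(x, y) ∧
    2 ≤ (y - x).val ∧ (y - x).val ≤ N - 2 ∧ (d - 1) ∣ ((y - x).val - 1)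

/-- Two diagonals cross: the endpoints of one separate the endpoints of the other,
i.e. one endpoint lies strictly inside one open arc determined by the other diagonal
and the other endpoint lies strictly inside the other open arc. -/
def Crosses (N : ℕ) (p q : Sym2 (ZMod N)) : Prop :=
  ∃ a b c e : ZMod N, p = s(a, b) ∧ q = s(c, e) ∧ InArc N a b c ∧ InArc N b a e

/-- A `(d+1)`-angulation of the `N`-gon: a maximal set of pairwise non-crossing
`(d−1)`-diagonals. -/
def IsAngulation (d N : ℕ) (T : Set (Sym2 (ZMod N))) : Prop :=
  (∀ p ∈ T, IsDiag d N p) ∧ (∀ p ∈ T, ∀ q ∈ T, ¬ Crosses N p q) ∧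
    ∀ S : Set (Sym2 (ZMod N)), (∀ p ∈ S, IsDiag d N p) →
      (∀ p ∈ S, ∀ q ∈ S, ¬ Crosses N p q) → T ⊆ S → S = T

/-- The `k`-th power of the rotation `ρ` (one step anticlockwise, `x ↦ x − 1`),
acting on unordered pairs. -/
def rot (N k : ℕ) (p : Sym2 (ZMod N)) : Sym2 (ZMod N) :=
  Sym2.map (fun x => x - (k : ZMod N)) p

/-- `G` is a `(d+1)`-angle of the partial `(d+1)`-angulation `T`: `G` is a set of
`d+1` corners such that each pair of cyclically consecutive elements of `G` is either
at cyclic distance `1` (an outer edge) or forms a `(d−1)`-diagonal belonging to `T`. -/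
def IsAngle (d N : ℕ) (T : Set (Sym2 (ZMod N))) (G : Finset (ZMod N)) : Prop :=
  G.card = d + 1 ∧
    ∀ x y : ZMod N, x ∈ G → y ∈ G → x ≠ y → (∀ z ∈ G, ¬ InArc N x y z) →
      ((y - x).val = 1 ∨ s(x, y) ∈ T)

/-!
Every `(d+1)`-angulation of `P_N` has exactly `ℓ - 1` diagonals: a shortest diagonal of a maximal
family cuts off a `(d+1)`-gon, and contracting it leaves a maximal family of the
`(N - (d - 1))`-gon.

A diagonal fixed by a nontrivial rotation is a diameter, and unless `ρ^m`, `m = n (d - 1)`, is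
trivial or the half-turn, its image under `ρ^m` is another diameter crossing it. So otherwise
`⟨ρ^m⟩` acts freely on an invariant angulation and its order `r` divides `ℓ - 1`; together with
`r ∣ N`, `N ∣ r m` and `gcd(N, d - 1) ∣ 2` this gives `N ∣ t n`.

Conversely, for `r ∣ gcd(N, d + 1, ℓ - 1)` the `r` fans of `(ℓ - 1) / r` diagonals at the corners
`0, N/r, 2N/r, …` each fit into an arc of length `N/r`, so they form `ℓ - 1` non-crossing
diagonals, hence an angulation invariant under `ρ^(N/r)`. For even `ℓ`, the fan of `ℓ / 2`
diagonals at `0` ending in a diameter together with its half-turn is invariant under `ρ^(N/2)`.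
-/

open Function

section Arcs

variable {N : ℕ}

lemma not_inArc_left (a b : ZMod N) : ¬ InArc N a b a := by
  simp [InArc]

lemma not_inArc_right (a b : ZMod N) : ¬ InArc N a b b :=
  fun h => h.2.false

lemma inArc_add_right_iff (a b c z : ZMod N) :
    InArc N (a + z) (b + z) (c + z) ↔ InArc N a b c := by
  simp only [InArc, add_sub_add_right_eq_sub]

theorem crosses_mk_iff (a b c e : ZMod N) :
    Crosses N s(a, b) s(c, e) ↔
      InArc N a b c ∧ InArc N b a e ∨ InArc N a b e ∧ InArc N b a c := by
  constructor
  · rintro ⟨a', b', c', e', hp, hq, h₁, h₂⟩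
    rcases Sym2.eq_iff.1 hp with ⟨rfl, rfl⟩ | ⟨rfl, rfl⟩ <;>
      rcases Sym2.eq_iff.1 hq with ⟨rfl, rfl⟩ | ⟨rfl, rfl⟩ <;> tauto
  · rintro (⟨h₁, h₂⟩ | ⟨h₁, h₂⟩)
    · exact ⟨a, b, c, e, rfl, rfl, h₁, h₂⟩
    · exact ⟨a, b, e, c, rfl, Sym2.eq_swap, h₁, h₂⟩

lemma not_crosses_of_not_inArc {a b c e : ZMod N} (hc : ¬ InArc N a b c)
    (he : ¬ InArc N a b e) : ¬ Crosses N s(a, b) s(c, e) := by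
  rw [crosses_mk_iff]
  tauto

lemma not_crosses_mk_left (a b e : ZMod N) : ¬ Crosses N s(a, b) s(a, e) := by
  rw [crosses_mk_iff]
  have := not_inArc_left a b
  have := not_inArc_right b a
  tauto

lemma not_crosses_self (p : Sym2 (ZMod N)) : ¬ Crosses N p p := by
  induction p using Sym2.ind with
  | _ a b => exact not_crosses_mk_left a b b

end Arcs

section Translate

variable {d N : ℕ}

def translateChord (z : ZMod N) (p : Sym2 (ZMod N)) : Sym2 (ZMod N) :=
  p.map (· + z)

@[simp]
lemma translateChord_mk (z x y : ZMod N) : translateChord z s(x, y) = s(x + z, y + z) := rfl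

lemma translateChord_translateChord (z w : ZMod N) (p : Sym2 (ZMod N)) :
    translateChord z (translateChord w p) = translateChord (w + z) p := by
  induction p using Sym2.ind with
  | _ x y => simp [add_assoc]

lemma translateChord_zero (p : Sym2 (ZMod N)) : translateChord 0 p = p := by
  induction p using Sym2.ind with
  | _ x y => simp

lemma rot_eq_translateChord (k : ℕ) : rot N k = translateChord (-(k : ZMod N)) := by
  funext p
  simp [rot, translateChord, sub_eq_add_neg]

lemma rot_add (k k' : ℕ) : rot N (k + k') = rot N k ∘ rot N k' := by
  funext p
  simp only [rot_eq_translateChord, comp_apply, translateChord_translateChord, Nat.cast_add,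
    neg_add_rev]

lemma iterate_rot (m j : ℕ) : (rot N m)^[j] = rot N (j * m) := by
  induction j with
  | zero => funext p; simp [rot_eq_translateChord, translateChord_zero]
  | succ j ih => rw [iterate_succ', ih, add_one_mul, add_comm, rot_add]

lemma crosses_translateChord_iff (z : ZMod N) (p q : Sym2 (ZMod N)) :
    Crosses N (translateChord z p) (translateChord z q) ↔ Crosses N p q := by
  induction p using Sym2.ind with
  | _ a b =>
    induction q using Sym2.ind with
    | _ c e => simp only [translateChord_mk, crosses_mk_iff, inArc_add_right_iff]

lemma IsDiag.translateChord {p : Sym2 (ZMod N)} (h : IsDiag d N p) (z : ZMod N) :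
    IsDiag d N (translateChord z p) := by
  obtain ⟨x, y, rfl, h⟩ := h
  exact ⟨x + z, y + z, rfl, by rwa [add_sub_add_right_eq_sub]⟩

lemma eq_zero_or_diameter_of_translateChord_eq (z : ZMod N) (p : Sym2 (ZMod N))
    (h : translateChord z p = p) : z = 0 ∨ ∃ x, p = s(x, x + z) ∧ z + z = 0 := by
  induction p using Sym2.ind with
  | _ x y =>
    rw [translateChord_mk] at h
    rcases Sym2.eq_iff.1 h with ⟨hx, -⟩ | ⟨hx, hy⟩
    · exact Or.inl (by simpa using hx)
    · subst hx
      exact Or.inr ⟨x, rfl, by simpa [add_assoc] using hy⟩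

end Translate

section ChordFamilies

variable {d M a : ℕ}

/-- `(d - 1)`-diagonals of the `M`-gon with corners `0, …, M - 1`, as pairs `c.1 < c.2`. -/
def IsChord (d M : ℕ) (c : ℕ × ℕ) : Prop :=
  c.1 + 2 ≤ c.2 ∧ c.2 < M ∧ c.2 + 2 ≤ M + c.1 ∧ (d - 1) ∣ c.2 - c.1 - 1

def Interleaved (c c' : ℕ × ℕ) : Prop :=
  c.1 < c'.1 ∧ c'.1 < c.2 ∧ c.2 < c'.2 ∨ c'.1 < c.1 ∧ c.1 < c'.2 ∧ c'.2 < c.2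

lemma Interleaved.symm {c c' : ℕ × ℕ} (h : Interleaved c c') : Interleaved c' c := by
  unfold Interleaved at *
  omega

structure IsMaxChordFamily (d M : ℕ) (F : Set (ℕ × ℕ)) : Prop where
  isChord : ∀ c ∈ F, IsChord d M c
  not_interleaved : ∀ c ∈ F, ∀ c' ∈ F, ¬ Interleaved c c'
  mem_of_not_interleaved : ∀ c, IsChord d M c → (∀ c' ∈ F, ¬ Interleaved c c') → c ∈ F

lemma IsChord.length_cases {c : ℕ × ℕ} (hd : 2 ≤ d) (hc : IsChord d M c) :
    c.2 = c.1 + d ∨ c.1 + (2 * d - 1) ≤ c.2 := by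
  obtain ⟨h₁, -, -, k, hk⟩ := hc
  rcases k with _ | _ | k
  · omega
  · omega
  · have : (d - 1) * 2 ≤ (d - 1) * (k + 1 + 1) := Nat.mul_le_mul_left _ (by omega)
    omega

lemma IsMaxChordFamily.finite {F : Set (ℕ × ℕ)} (hF : IsMaxChordFamily d M F) : F.Finite :=
  ((Set.finite_Iio M).prod (Set.finite_Iio M)).subset fun c hc => by
    have := hF.isChord c hc
    exact ⟨show c.1 < M by unfold IsChord at this; omega, this.2.1⟩

def AvoidsEar (a d : ℕ) (c : ℕ × ℕ) : Prop :=
  (c.1 ≤ a ∨ a + d ≤ c.1) ∧ (c.2 ≤ a ∨ a + d ≤ c.2)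

lemma IsMaxChordFamily.exists_ear {F : Set (ℕ × ℕ)} (hd : 2 ≤ d) (hF : IsMaxChordFamily d M F)
    (hne : F.Nonempty) :
    ∃ a, (a, a + d) ∈ F ∧ ∀ c ∈ F, AvoidsEar a d c := by
  obtain ⟨p, hpF, hmin⟩ := Set.exists_min_image F (fun c => c.2 - c.1) hF.finite hne
  have hp := hF.isChord p hpF
  have hout : ∀ c ∈ F, (c.1 ≤ p.1 ∨ p.2 ≤ c.1) ∧ (c.2 ≤ p.1 ∨ p.2 ≤ c.2) := by
    intro c hc
    have := hmin c hc
    have := hF.not_interleaved p hpF c hc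
    have := hF.not_interleaved c hc p hpF
    have := (hF.isChord c hc).1
    unfold Interleaved at *
    omega
  have hlen : p.2 = p.1 + d := by
    refine (hp.length_cases hd).resolve_right fun hlong => ?_
    have hchord : IsChord d M (p.1, p.1 + d) := by
      refine ⟨by dsimp only; omega, by dsimp only; unfold IsChord at hp; omega,
        by dsimp only; unfold IsChord at hp; omega, ?_⟩
      rw [show p.1 + d - p.1 - 1 = d - 1 by omega]
    have hmem := hF.mem_of_not_interleaved _ hchord fun c hc => by
      have := hout c hc
      unfold Interleaved
      omega
    have := hmin _ hmem
    dsimp only at this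
    omega
  refine ⟨p.1, by rw [← hlen]; exact hpF, fun c hc => ?_⟩
  have := hout c hc
  unfold AvoidsEar
  omega

/-- Contracting the ear `(a, a + d)` to the edge `(a, a + 1)`. -/
def squeeze (a d x : ℕ) : ℕ := if x ≤ a then x else x - (d - 1)

def unsqueeze (a d x : ℕ) : ℕ := if x ≤ a then x else x + (d - 1)

def squeezeChord (a d : ℕ) (c : ℕ × ℕ) : ℕ × ℕ := (squeeze a d c.1, squeeze a d c.2)

def unsqueezeChord (a d : ℕ) (c : ℕ × ℕ) : ℕ × ℕ := (unsqueeze a d c.1, unsqueeze a d c.2)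

lemma squeezeChord_unsqueezeChord (c : ℕ × ℕ) : squeezeChord a d (unsqueezeChord a d c) = c := by
  ext <;> simp only [squeezeChord, unsqueezeChord, squeeze, unsqueeze] <;> split_ifs <;> omega

lemma avoidsEar_unsqueezeChord (hd : 1 ≤ d) (c : ℕ × ℕ) : AvoidsEar a d (unsqueezeChord a d c) := by
  simp only [AvoidsEar, unsqueezeChord, unsqueeze]
  split_ifs <;> omega

lemma interleaved_squeezeChord_iff (hd : 1 ≤ d) {c e : ℕ × ℕ} (hc : AvoidsEar a d c)
    (he : AvoidsEar a d e) :
    Interleaved (squeezeChord a d c) (squeezeChord a d e) ↔ Interleaved c e := by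
  simp only [AvoidsEar, Interleaved, squeezeChord, squeeze] at *
  split_ifs <;> omega

lemma squeezeChord_injOn (hd : 1 ≤ d) : Set.InjOn (squeezeChord a d) {c | AvoidsEar a d c} := by
  rintro c ⟨hc₁, hc₂⟩ e ⟨he₁, he₂⟩ h
  simp only [squeezeChord, squeeze, Prod.mk.injEq] at h
  ext <;> split_ifs at h <;> omega

lemma isChord_squeezeChord (hd : 2 ≤ d) (haM : a + d < M) {c : ℕ × ℕ} (hc : IsChord d M c)
    (hav : AvoidsEar a d c) (hne : c ≠ (a, a + d)) :
    IsChord d (M - (d - 1)) (squeezeChord a d c) := by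
  have hlen := hc.length_cases hd
  obtain ⟨h₁, h₂, h₃, hdvd⟩ := hc
  obtain ⟨hav₁ | hav₁, hav₂ | hav₂⟩ := hav
  · simp only [squeezeChord, squeeze, if_pos hav₁, if_pos hav₂]
    exact ⟨h₁, by omega, by omega, hdvd⟩
  · have hspan : c.1 + (2 * d - 1) ≤ c.2 := hlen.resolve_left fun h =>
      hne (Prod.ext (by omega) (by dsimp only; omega))
    simp only [squeezeChord, squeeze, if_pos hav₁, if_neg (show ¬ c.2 ≤ a by omega)]
    refine ⟨by omega, by omega, by omega, ?_⟩
    rw [show c.2 - (d - 1) - c.1 - 1 = c.2 - c.1 - 1 - (d - 1) by omega]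
    exact Nat.dvd_sub hdvd dvd_rfl
  · omega
  · simp only [squeezeChord, squeeze, if_neg (show ¬ c.1 ≤ a by omega),
      if_neg (show ¬ c.2 ≤ a by omega)]
    refine ⟨by omega, by omega, by omega, ?_⟩
    rwa [show c.2 - (d - 1) - (c.1 - (d - 1)) - 1 = c.2 - c.1 - 1 by omega]

lemma isChord_unsqueezeChord (hd : 2 ≤ d) (haM : a + d < M) {c : ℕ × ℕ}
    (hc : IsChord d (M - (d - 1)) c) : IsChord d M (unsqueezeChord a d c) := by
  obtain ⟨h₁, h₂, h₃, hdvd⟩ := hc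
  simp only [unsqueezeChord, unsqueeze]
  split_ifs with hc₁ hc₂ hc₂
  · exact ⟨h₁, by omega, by omega, hdvd⟩
  · refine ⟨by omega, by omega, by omega, ?_⟩
    rw [show c.2 + (d - 1) - c.1 - 1 = c.2 - c.1 - 1 + (d - 1) by omega]
    exact Nat.dvd_add hdvd dvd_rfl
  · omega
  · refine ⟨by omega, by omega, by omega, ?_⟩
    rwa [show c.2 + (d - 1) - (c.1 + (d - 1)) - 1 = c.2 - c.1 - 1 by omega]

theorem IsMaxChordFamily.squeeze {F : Set (ℕ × ℕ)} (hd : 2 ≤ d) (hF : IsMaxChordFamily d M F)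
    (hear : (a, a + d) ∈ F) (hav : ∀ c ∈ F, AvoidsEar a d c) :
    IsMaxChordFamily d (M - (d - 1)) (squeezeChord a d '' (F \ {(a, a + d)})) where
  isChord := by
    rintro _ ⟨c, ⟨hc, hne⟩, rfl⟩
    have haM : a + d < M := (hF.isChord _ hear).2.1
    exact isChord_squeezeChord hd haM (hF.isChord c hc) (hav c hc) hne
  not_interleaved := by
    rintro _ ⟨c, ⟨hc, -⟩, rfl⟩ _ ⟨e, ⟨he, -⟩, rfl⟩
    rw [interleaved_squeezeChord_iff (by omega) (hav c hc) (hav e he)]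
    exact hF.not_interleaved c hc e he
  mem_of_not_interleaved := by
    intro c hc hfree
    have haM : a + d < M := (hF.isChord _ hear).2.1
    have hav' := avoidsEar_unsqueezeChord (a := a) (d := d) (by omega) c
    have hmem : unsqueezeChord a d c ∈ F := by
      refine hF.mem_of_not_interleaved _ (isChord_unsqueezeChord hd haM hc) fun e he => ?_
      by_cases hea : e = (a, a + d)
      · subst hea
        obtain ⟨h₁, h₂⟩ := hav'
        unfold Interleaved
        omega
      · rw [← interleaved_squeezeChord_iff (by omega) hav' (hav e he),
          squeezeChord_unsqueezeChord]
        exact hfree _ ⟨e, ⟨he, hea⟩, rfl⟩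
    refine ⟨_, ⟨hmem, fun h => ?_⟩, squeezeChord_unsqueezeChord c⟩
    have h₁ := hc.1
    simp only [unsqueezeChord, unsqueeze, Set.mem_singleton_iff, Prod.ext_iff] at h
    split_ifs at h <;> omega

theorem IsMaxChordFamily.ncard_add_one_mul (hd : 2 ≤ d) (hM : d + 1 ≤ M)
    (hdvd : (d - 1) ∣ M - 2) {F : Set (ℕ × ℕ)} (hF : IsMaxChordFamily d M F) :
    (F.ncard + 1) * (d - 1) = M - 2 := by
  induction M using Nat.strong_induction_on generalizing F with
  | _ M ih =>
  rcases F.eq_empty_or_nonempty with rfl | hne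
  · suffices M = d + 1 by subst this; simp
    by_contra hM'
    have hchord : IsChord d M (0, d) :=
      ⟨by dsimp only; omega, by dsimp only; omega, by dsimp only; omega, by simp⟩
    exact hF.mem_of_not_interleaved _ hchord (by simp)
  obtain ⟨a, hear, hav⟩ := hF.exists_ear hd hne
  have hdM : d + 2 ≤ M := by
    have := (hF.isChord _ hear).2.2.1
    dsimp only at this
    omega
  have hM2 : 2 * (d - 1) ≤ M - 2 := by
    obtain ⟨k, hk⟩ := hdvd
    rcases k with _ | _ | k
    · omega
    · omega
    · have : (d - 1) * 2 ≤ (d - 1) * (k + 1 + 1) := Nat.mul_le_mul_left _ (by omega)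
      omega
  have hsq := ih (M - (d - 1)) (by omega) (by omega)
    (by rw [show M - (d - 1) - 2 = M - 2 - (d - 1) by omega]; exact Nat.dvd_sub hdvd dvd_rfl)
    (hF.squeeze hd hear hav)
  rw [(squeezeChord_injOn (by omega)).mono (fun c hc => hav c hc.1) |>.ncard_image,
    Set.ncard_sdiff_singleton_add_one hear hF.finite] at hsq
  rw [add_one_mul]
  omega

section Transfer

variable {d ℓ N : ℕ}

lemma IsAngulation.mem_of_forall_not_crosses {T : Set (Sym2 (ZMod N))} (hT : IsAngulation d N T)
    {q : Sym2 (ZMod N)} (hq : IsDiag d N q) (h : ∀ p ∈ T, ¬ Crosses N p q ∧ ¬ Crosses N q p) :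
    q ∈ T := by
  have hins := hT.2.2 (insert q T) (by rintro p (rfl | hp); exacts [hq, hT.1 _ hp])
    (by
      rintro p (rfl | hp) p' (rfl | hp')
      exacts [not_crosses_self _, (h p' hp').2, (h p hp).1, hT.2.1 p hp p' hp'])
    (Set.subset_insert q T)
  exact hins ▸ Set.mem_insert q T

variable [NeZero N]

lemma val_sub_add_val_sub {x y : ZMod N} (h : x ≠ y) : (y - x).val + (x - y).val = N := by
  rw [← neg_sub y x, ZMod.neg_val, if_neg (sub_ne_zero.2 h.symm)]
  have := ZMod.val_lt (y - x)
  omega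

lemma val_sub_of_val_lt {x y : ZMod N} (h : y.val < x.val) : (y - x).val = N - (x.val - y.val) := by
  have hxy : x ≠ y := by rintro rfl; omega
  have := val_sub_add_val_sub hxy
  rw [ZMod.val_sub h.le] at this
  omega

lemma inArc_iff_of_val_lt {a b : ZMod N} (hab : a.val < b.val) (z : ZMod N) :
    InArc N a b z ↔ a.val < z.val ∧ z.val < b.val := by
  unfold InArc
  rw [ZMod.val_sub hab.le]
  rcases le_or_gt a.val z.val with h | h
  · rw [ZMod.val_sub h]
    omega
  · rw [val_sub_of_val_lt h]
    have := ZMod.val_lt b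
    omega

lemma inArc_swap_iff_of_val_lt {a b : ZMod N} (hab : a.val < b.val) (z : ZMod N) :
    InArc N b a z ↔ z.val < a.val ∨ b.val < z.val := by
  unfold InArc
  rw [val_sub_of_val_lt hab]
  rcases le_or_gt b.val z.val with h | h
  · rw [ZMod.val_sub h]
    have := ZMod.val_lt z
    omega
  · rw [val_sub_of_val_lt h]
    have := ZMod.val_lt b
    omega

def ofChord (N : ℕ) (c : ℕ × ℕ) : Sym2 (ZMod N) := s((c.1 : ZMod N), (c.2 : ZMod N))

lemma crosses_ofChord_iff {c e : ℕ × ℕ} (hc : c.1 < c.2) (hcN : c.2 < N) (he : e.1 < e.2)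
    (heN : e.2 < N) : Crosses N (ofChord N c) (ofChord N e) ↔ Interleaved c e := by
  have hv : ∀ x < N, ((x : ℕ) : ZMod N).val = x := fun x hx => ZMod.val_cast_of_lt hx
  have hab : ((c.1 : ℕ) : ZMod N).val < ((c.2 : ℕ) : ZMod N).val := by
    rw [hv _ (by omega), hv _ hcN]
    exact hc
  rw [ofChord, ofChord, crosses_mk_iff, inArc_iff_of_val_lt hab, inArc_iff_of_val_lt hab,
    inArc_swap_iff_of_val_lt hab, inArc_swap_iff_of_val_lt hab, hv _ (by omega), hv _ hcN,
    hv _ (by omega), hv _ heN]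
  unfold Interleaved
  omega

omit [NeZero N] in
lemma ofChord_injOn : Set.InjOn (ofChord N) {c | c.1 < c.2 ∧ c.2 < N} := by
  rintro c ⟨hc, hcN⟩ e ⟨he, heN⟩ h
  have hv : ∀ x < N, ((x : ℕ) : ZMod N).val = x := fun x hx => ZMod.val_cast_of_lt hx
  rcases Sym2.eq_iff.1 h with ⟨h₁, h₂⟩ | ⟨h₁, h₂⟩ <;>
    have h₁ := congrArg ZMod.val h₁ <;> have h₂ := congrArg ZMod.val h₂ <;>
    rw [hv _ (by omega), hv _ (by omega)] at h₁ h₂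
  · exact Prod.ext h₁ h₂
  · omega

lemma isDiag_iff_exists_isChord (hdvd : (d - 1) ∣ N - 2) {p : Sym2 (ZMod N)} :
    IsDiag d N p ↔ ∃ c, IsChord d N c ∧ ofChord N c = p := by
  constructor
  · rintro ⟨x, y, rfl, h₁, h₂, h₃⟩
    rcases lt_trichotomy x.val y.val with hlt | heq | hgt
    · rw [ZMod.val_sub hlt.le] at h₁ h₂ h₃
      exact ⟨(x.val, y.val), ⟨by omega, ZMod.val_lt y, by omega, h₃⟩,
        by simp [ofChord]⟩
    · rw [ZMod.val_injective N heq, sub_self, ZMod.val_zero] at h₁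
      omega
    · rw [val_sub_of_val_lt hgt] at h₁ h₂ h₃
      refine ⟨(y.val, x.val), ⟨by omega, ZMod.val_lt x, by omega, ?_⟩,
        by simp [ofChord, Sym2.eq_swap]⟩
      rw [show x.val - y.val - 1 = N - 2 - (N - (x.val - y.val) - 1) by omega]
      exact Nat.dvd_sub hdvd h₃
  · rintro ⟨c, ⟨h₁, h₂, h₃, h₄⟩, rfl⟩
    have hv : ∀ x < N, ((x : ℕ) : ZMod N).val = x := fun x hx => ZMod.val_cast_of_lt hx
    refine ⟨_, _, rfl, ?_⟩
    rw [ZMod.val_sub (by rw [hv _ (by omega), hv _ h₂]; omega), hv _ h₂, hv _ (by omega)]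
    exact ⟨by omega, by omega, h₄⟩

theorem IsAngulation.ncard_eq {T : Set (Sym2 (ZMod N))} (hd : 2 ≤ d) (hl : 2 ≤ ℓ)
    (hN : N = (d - 1) * ℓ + 2) (hT : IsAngulation d N T) : T.ncard = ℓ - 1 := by
  have hdvd : (d - 1) ∣ N - 2 := ⟨ℓ, by omega⟩
  set F := {c | IsChord d N c ∧ ofChord N c ∈ T}
  have hTF : ofChord N '' F = T := by
    ext p
    refine ⟨by rintro ⟨c, ⟨-, hc⟩, rfl⟩; exact hc, fun hp => ?_⟩
    obtain ⟨c, hc, rfl⟩ := (isDiag_iff_exists_isChord hdvd).1 (hT.1 p hp)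
    exact ⟨c, ⟨hc, hp⟩, rfl⟩
  have hbounds : ∀ c, IsChord d N c → c.1 < c.2 ∧ c.2 < N := fun c hc =>
    ⟨by have := hc.1; omega, hc.2.1⟩
  have hF : IsMaxChordFamily d N F := by
    refine ⟨fun c hc => hc.1, fun c hc e he h => ?_, fun c hc hfree => ?_⟩
    · obtain ⟨hc₁, hc₂⟩ := hbounds c hc.1
      obtain ⟨he₁, he₂⟩ := hbounds e he.1
      exact hT.2.1 _ hc.2 _ he.2 ((crosses_ofChord_iff hc₁ hc₂ he₁ he₂).2 h)
    · refine ⟨hc, hT.mem_of_forall_not_crosses ((isDiag_iff_exists_isChord hdvd).2 ⟨c, hc, rfl⟩)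
        fun p hp => ?_⟩
      rw [← hTF] at hp
      obtain ⟨e, he, rfl⟩ := hp
      obtain ⟨hc₁, hc₂⟩ := hbounds c hc
      obtain ⟨he₁, he₂⟩ := hbounds e he.1
      rw [crosses_ofChord_iff he₁ he₂ hc₁ hc₂, crosses_ofChord_iff hc₁ hc₂ he₁ he₂]
      exact ⟨fun h => hfree e he h.symm, hfree e he⟩
  have hcount := hF.ncard_add_one_mul hd (by
    have : (d - 1) * 2 ≤ (d - 1) * ℓ := Nat.mul_le_mul_left _ hl
    omega) hdvd
  rw [← hTF, (ofChord_injOn.mono fun c hc => hbounds c hc.1).ncard_image]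
  rw [show N - 2 = ℓ * (d - 1) by rw [hN, mul_comm]; omega] at hcount
  have := Nat.eq_of_mul_eq_mul_right (by omega) hcount
  omega

end Transfer

section Completion

variable {d ℓ N : ℕ} [NeZero N]

lemma exists_isAngulation_superset {S : Set (Sym2 (ZMod N))} (hS₁ : ∀ p ∈ S, IsDiag d N p)
    (hS₂ : ∀ p ∈ S, ∀ q ∈ S, ¬ Crosses N p q) : ∃ T, IsAngulation d N T ∧ S ⊆ T := by
  obtain ⟨T, ⟨hST, hT₁, hT₂⟩, hmax⟩ := Set.Finite.exists_maximalFor Set.ncard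
    {T | S ⊆ T ∧ (∀ p ∈ T, IsDiag d N p) ∧ ∀ p ∈ T, ∀ q ∈ T, ¬ Crosses N p q}
    (Set.toFinite _) ⟨S, subset_rfl, hS₁, hS₂⟩
  refine ⟨T, ⟨hT₁, hT₂, fun U hU₁ hU₂ hTU => ?_⟩, hST⟩
  have hle := hmax ⟨hST.trans hTU, hU₁, hU₂⟩ (Set.ncard_le_ncard hTU)
  exact (Set.eq_of_subset_of_ncard_le hTU hle).symm

theorem isAngulation_of_le_ncard (hd : 2 ≤ d) (hl : 2 ≤ ℓ) (hN : N = (d - 1) * ℓ + 2)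
    {T : Set (Sym2 (ZMod N))} (hT₁ : ∀ p ∈ T, IsDiag d N p)
    (hT₂ : ∀ p ∈ T, ∀ q ∈ T, ¬ Crosses N p q) (hcard : ℓ - 1 ≤ T.ncard) :
    IsAngulation d N T := by
  refine ⟨hT₁, hT₂, fun S hS₁ hS₂ hTS => ?_⟩
  obtain ⟨U, hU, hSU⟩ := exists_isAngulation_superset hS₁ hS₂
  have hTU : T = U :=
    Set.eq_of_subset_of_ncard_le (hTS.trans hSU) (by rw [hU.ncard_eq hd hl hN]; exact hcard)
  subst hTU
  exact hSU.antisymm hTS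

end Completion

theorem dvd_ncard_of_minimalPeriod_eq {α : Type*} {f : α → α} {s : Set α} (hs : s.Finite)
    (hf : Set.MapsTo f s s) {r : ℕ} (hr : 0 < r) (hper : ∀ x ∈ s, minimalPeriod f x = r) :
    r ∣ s.ncard := by
  induction h : s.ncard using Nat.strong_induction_on generalizing s with
  | _ n ih =>
  rcases s.eq_empty_or_nonempty with rfl | ⟨x, hx⟩
  · simp [← h]
  set O := (fun j => f^[j] x) '' Set.Iio r
  have hOs : O ⊆ s := by
    rintro _ ⟨j, -, rfl⟩
    exact hf.iterate j hx
  have hOcard : O.ncard = r := by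
    have hinj : Set.InjOn (fun j => f^[j] x) (Set.Iio r) :=
      hper x hx ▸ iterate_injOn_Iio_minimalPeriod
    rw [hinj.ncard_image]
    simp
  have hiter : ∀ j, f^[j] x ∈ O := fun j =>
    ⟨j % r, Nat.mod_lt j hr, by rw [← hper x hx]; exact iterate_mod_minimalPeriod_eq⟩
  have hmaps : Set.MapsTo f (s \ O) (s \ O) := by
    rintro y ⟨hy, hyO⟩
    refine ⟨hf hy, fun ⟨j, _, hj⟩ => hyO ?_⟩
    have hback : f^[r - 1] (f y) = y := by
      rw [← iterate_succ_apply, Nat.succ_eq_add_one, Nat.sub_add_cancel hr, ← hper y hy]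
      exact isPeriodicPt_minimalPeriod f y
    rw [← hback, ← hj, ← iterate_add_apply]
    exact hiter _
  have hsub : (s \ O).ncard = n - r := by rw [Set.ncard_sdiff hOs (hs.subset hOs), h, hOcard]
  have hrn : r ≤ n := h ▸ hOcard ▸ Set.ncard_le_ncard hOs hs
  have := ih (n - r) (by omega) hs.sdiff hmaps (fun y hy => hper y hy.1) hsub
  rw [show n = n - r + r by omega]
  exact dvd_add this dvd_rfl

section Arithmetic

variable {d ℓ n N : ℕ}

lemma sub_one_mul_sub_one_add (hd : 1 ≤ d) (hl : 1 ≤ ℓ) (hN : N = (d - 1) * ℓ + 2) :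
    (d - 1) * (ℓ - 1) + (d + 1) = N := by
  rw [Nat.mul_sub_one]
  have := Nat.le_mul_of_pos_right (d - 1) hl
  omega

lemma gcd_sub_one_dvd_two (hN : N = (d - 1) * ℓ + 2) : Nat.gcd N (d - 1) ∣ 2 := by
  rw [hN, Nat.gcd_mul_left_add_left]
  exact Nat.gcd_dvd_left 2 (d - 1)

theorem dvd_gcd_mul_of_dvd_mul_mul (hd : 2 ≤ d) (hl : 2 ≤ ℓ) (hN : N = (d - 1) * ℓ + 2) {r : ℕ}
    (hrN : r ∣ N) (hrl : r ∣ ℓ - 1) (hm : N ∣ r * (n * (d - 1))) :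
    N ∣ Nat.gcd (d + 1) (2 * (ℓ - 1)) * n := by
  have hid := sub_one_mul_sub_one_add (by omega) (by omega) hN
  obtain ⟨q, rfl⟩ := hrN
  have hr : 0 < r := Nat.pos_of_ne_zero (by rintro rfl; omega)
  have hq : q ∣ n * (d - 1) := Nat.dvd_of_mul_dvd_mul_left hr hm
  set g := Nat.gcd q (d - 1)
  have hg₂ : g ∣ 2 := (Nat.dvd_gcd ((Nat.gcd_dvd_left _ _).trans (dvd_mul_left q r))
    (Nat.gcd_dvd_right _ _)).trans (gcd_sub_one_dvd_two hN)
  have hgpos : 0 < g := Nat.gcd_pos_of_pos_right _ (by omega)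
  have hqn : q / g ∣ n := by
    refine (Nat.coprime_div_gcd_div_gcd hgpos).dvd_of_dvd_mul_right ?_
    rw [← Nat.mul_div_assoc n (Nat.gcd_dvd_right q (d - 1))]
    exact Nat.div_dvd_div (Nat.gcd_dvd_left q (d - 1)) hq
  have hgr : g * r ∣ Nat.gcd (d + 1) (2 * (ℓ - 1)) := by
    refine Nat.dvd_gcd ?_ (mul_dvd_mul hg₂ hrl)
    rw [show d + 1 = r * q - (d - 1) * (ℓ - 1) by omega, mul_comm g r]
    exact Nat.dvd_sub (mul_dvd_mul_left r (Nat.gcd_dvd_left _ _))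
      (mul_comm r g ▸ mul_dvd_mul (Nat.gcd_dvd_right _ _) hrl)
  calc r * q = g * r * (q / g) := by
        rw [mul_comm g r, mul_assoc, Nat.mul_div_cancel' (Nat.gcd_dvd_left q (d - 1))]
    _ ∣ Nat.gcd (d + 1) (2 * (ℓ - 1)) * n := mul_dvd_mul hgr hqn

theorem dvd_two_mul_or_dvd_gcd_mul (hd : 2 ≤ d) (hl : 2 ≤ ℓ) (hN : N = (d - 1) * ℓ + 2)
    (h₂ : N ∣ 2 * (n * (d - 1))) (h₁ : ¬ N ∣ n * (d - 1)) :
    N ∣ 2 * n ∨ N ∣ Nat.gcd (d + 1) (2 * (ℓ - 1)) * n := by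
  rcases Nat.even_or_odd (d - 1) with ⟨e, he⟩ | hodd
  · right
    have hℓ : Odd ℓ := by
      refine Nat.not_even_iff_odd.1 fun ⟨f, hf⟩ => h₁ ?_
      have hNM : N = 2 * (2 * e * f + 1) := by rw [hN, he, hf]; ring
      have hM : 2 * e * f + 1 ∣ n * (d - 1) :=
        Nat.dvd_of_mul_dvd_mul_left two_pos (hNM ▸ h₂)
      have hcop : Nat.Coprime 2 (2 * e * f + 1) := Nat.coprime_two_left.2 ⟨e * f, by ring⟩
      exact hNM ▸ hcop.mul_dvd_of_dvd_of_dvd ⟨n * e, by rw [he]; ring⟩ hM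
    obtain ⟨f, hf⟩ := hℓ
    exact dvd_gcd_mul_of_dvd_mul_mul hd hl hN ⟨e * ℓ + 1, by rw [hN, he]; ring⟩ ⟨f, by omega⟩ h₂
  · left
    have hcop : Nat.Coprime N (d - 1) := by
      rcases (Nat.dvd_prime Nat.prime_two).1 (gcd_sub_one_dvd_two hN) with h | h
      · exact h
      · exact absurd (even_iff_two_dvd.2 (h ▸ Nat.gcd_dvd_right N (d - 1)))
          (Nat.not_even_iff_odd.2 hodd)
    exact hcop.dvd_of_dvd_mul_right (by rwa [mul_assoc])

theorem exists_mul_eq_of_dvd_gcd_mul (hd : 2 ≤ d) (hN : N = (d - 1) * ℓ + 2)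
    (h : N ∣ Nat.gcd (d + 1) (2 * (ℓ - 1)) * n) :
    ∃ r q, r * q = N ∧ r ∣ d + 1 ∧ r ∣ ℓ - 1 ∧ q ∣ n * (d - 1) := by
  set t := Nat.gcd (d + 1) (2 * (ℓ - 1))
  set s := Nat.gcd N t
  have hspos : 0 < s := Nat.gcd_pos_of_pos_left _ (by omega)
  have hsN : s ∣ N := Nat.gcd_dvd_left N t
  have hst : s ∣ t := Nat.gcd_dvd_right N t
  have hNs : N / s ∣ n := by
    refine (Nat.coprime_div_gcd_div_gcd hspos).dvd_of_dvd_mul_left ?_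
    rw [Nat.div_mul_right_comm hst]
    exact Nat.div_dvd_div hsN h
  set g := Nat.gcd s 2
  have hgpos : 0 < g := Nat.gcd_pos_of_pos_right _ two_pos
  have hgs : g ∣ s := Nat.gcd_dvd_left s 2
  have hsd : s ∣ d + 1 := hst.trans (Nat.gcd_dvd_left _ _)
  refine ⟨s / g, g * (N / s), ?_, (Nat.div_dvd_of_dvd hgs).trans hsd, ?_, ?_⟩
  · rw [← mul_assoc, Nat.div_mul_cancel hgs, Nat.mul_div_cancel' hsN]
  · refine (Nat.coprime_div_gcd_div_gcd hgpos).dvd_of_dvd_mul_left ?_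
    rw [Nat.div_mul_right_comm (Nat.gcd_dvd_right s 2)]
    exact Nat.div_dvd_div hgs (hst.trans (Nat.gcd_dvd_right _ _))
  · have hgd : g ∣ d - 1 := by
      rw [show d - 1 = d + 1 - 2 by omega]
      exact Nat.dvd_sub (hgs.trans hsd) (Nat.gcd_dvd_right s 2)
    rw [mul_comm n]
    exact mul_dvd_mul hgd hNs

lemma even_of_dvd_two_mul (hN : N = (d - 1) * ℓ + 2) (h₂ : N ∣ 2 * n) (h₁ : ¬ N ∣ n * (d - 1)) :
    Even ℓ := by
  refine Nat.not_odd_iff_even.1 fun hℓ => h₁ ?_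
  rcases Nat.even_or_odd (d - 1) with ⟨e, he⟩ | hodd
  · exact h₂.trans ⟨e, by rw [he]; ring⟩
  · have hN : Odd N := hN ▸ (hodd.mul hℓ).add_even even_two
    exact (Nat.coprime_two_right.2 hN |>.dvd_of_dvd_mul_left h₂).mul_right _

end Arithmetic

section Necessity

variable {d ℓ n N : ℕ} [NeZero N]

lemma crosses_of_diameters {h x y : ZMod N} (hh : h + h = 0) (h₀ : h ≠ 0) (hyx : y - x ≠ 0)
    (hyxh : y - x ≠ h) : Crosses N s(x, x + h) s(y, y + h) := by
  have hneg : -h = h := neg_eq_of_add_eq_zero_left hh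
  have hH : h.val + h.val = N := by
    rcases lt_or_ge (h.val + h.val) N with hlt | hge
    · have h₀' := ZMod.val_add_of_lt hlt
      rw [hh, ZMod.val_zero] at h₀'
      have := (ZMod.val_ne_zero h).2 h₀
      omega
    · have := ZMod.val_add_val_of_le hge
      rw [hh, ZMod.val_zero] at this
      omega
  have hC := (ZMod.val_ne_zero _).2 hyx
  have hCH : (y - x).val ≠ h.val := fun e => hyxh (ZMod.val_injective N e)
  have hCN := ZMod.val_lt (y - x)
  have e₁ : x - (x + h) = h := by rw [sub_add_eq_sub_sub, sub_self, zero_sub, hneg]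
  have e₂ : y + h - x = y - x + h := by ring
  have e₃ : y - (x + h) = y - x + h := by rw [sub_add_eq_sub_sub, sub_eq_add_neg (y - x), hneg]
  rw [crosses_mk_iff]
  simp only [InArc, add_sub_cancel_left, add_sub_add_right_eq_sub, e₁, e₂, e₃]
  rcases lt_or_gt_of_ne hCH with hlt | hgt
  · left
    omega
  · right
    have := ZMod.val_add_val_of_le (a := y - x) (b := h) (by omega)
    omega

lemma IsAngulation.natCast_eq_zero_of_rot_eq_self {T : Set (Sym2 (ZMod N))} {m : ℕ}
    (hT : IsAngulation d N T) (hrot : rot N m '' T = T) (h₁ : ¬ N ∣ m) (h₂ : ¬ N ∣ 2 * m)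
    {p : Sym2 (ZMod N)} (hp : p ∈ T) {k : ℕ} (hk : rot N k p = p) : (k : ZMod N) = 0 := by
  rw [rot_eq_translateChord] at hk
  rcases eq_zero_or_diameter_of_translateChord_eq _ p hk with h | ⟨x, rfl, hh⟩
  · exact neg_eq_zero.1 h
  by_contra hk₀
  have hm : (m : ZMod N) ≠ 0 := fun h => h₁ ((ZMod.natCast_eq_zero_iff _ _).1 h)
  have hmem : s(x - m, x - m + -(k : ZMod N)) ∈ T := by
    rw [← hrot]
    refine ⟨_, hp, ?_⟩
    simp only [rot_eq_translateChord, translateChord_mk, ← sub_eq_add_neg]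
    ring_nf
  refine hT.2.1 _ hp _ hmem (crosses_of_diameters hh (neg_ne_zero.2 hk₀) ?_ ?_)
  · simpa using hm
  · intro h
    apply h₂
    rw [sub_sub_cancel_left] at h
    rw [← ZMod.natCast_eq_zero_iff, Nat.cast_mul, Nat.cast_two, two_mul, ← neg_eq_zero, neg_add,
      h, hh]

lemma IsAngulation.minimalPeriod_rot {T : Set (Sym2 (ZMod N))} {m : ℕ}
    (hT : IsAngulation d N T) (hrot : rot N m '' T = T) (h₁ : ¬ N ∣ m) (h₂ : ¬ N ∣ 2 * m)
    {p : Sym2 (ZMod N)} (hp : p ∈ T) : minimalPeriod (rot N m) p = addOrderOf (m : ZMod N) := by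
  have key : ∀ j, IsPeriodicPt (rot N m) j p ↔ addOrderOf (m : ZMod N) ∣ j := by
    intro j
    rw [IsPeriodicPt, IsFixedPt, iterate_rot, addOrderOf_dvd_iff_nsmul_eq_zero, nsmul_eq_mul,
      ← Nat.cast_mul]
    refine ⟨hT.natCast_eq_zero_of_rot_eq_self hrot h₁ h₂ hp, fun h => ?_⟩
    rw [rot_eq_translateChord, h, neg_zero, translateChord_zero]
  exact Nat.dvd_antisymm (isPeriodicPt_iff_minimalPeriod_dvd.1 ((key _).2 dvd_rfl))
    ((key _).1 (isPeriodicPt_minimalPeriod _ _))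

theorem IsAngulation.dvd_of_rot_image_eq (hd : 2 ≤ d) (hl : 2 ≤ ℓ) (hN : N = (d - 1) * ℓ + 2)
    {T : Set (Sym2 (ZMod N))} (hT : IsAngulation d N T) (hrot : rot N (n * (d - 1)) '' T = T) :
    N ∣ 2 * n ∨ N ∣ Nat.gcd (d + 1) (2 * (ℓ - 1)) * n := by
  set m := n * (d - 1)
  by_cases h₁ : N ∣ m
  · exact Or.inr (dvd_gcd_mul_of_dvd_mul_mul hd hl hN (one_dvd N) (one_dvd _) (by rwa [one_mul]))
  by_cases h₂ : N ∣ 2 * m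
  · exact dvd_two_mul_or_dvd_gcd_mul hd hl hN h₂ h₁
  have hr : addOrderOf (m : ZMod N) ∣ ℓ - 1 :=
    hT.ncard_eq hd hl hN ▸ dvd_ncard_of_minimalPeriod_eq (Set.toFinite T)
      (fun p hp => hrot ▸ Set.mem_image_of_mem _ hp) (addOrderOf_pos _)
      fun p hp => hT.minimalPeriod_rot hrot h₁ h₂ hp
  refine Or.inr (dvd_gcd_mul_of_dvd_mul_mul hd hl hN ?_ hr ?_)
  · simpa using addOrderOf_dvd_card (x := (m : ZMod N))
  · rw [← ZMod.natCast_eq_zero_iff, Nat.cast_mul, ← nsmul_eq_mul]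
    exact addOrderOf_nsmul_eq_zero _

end Necessity

section Fans

variable {d N q b : ℕ}

def fanChord (d N j : ℕ) : Sym2 (ZMod N) := s(0, ((1 + (j + 1) * (d - 1) : ℕ) : ZMod N))

def rotatedFans (d N q b : ℕ) : Set (Sym2 (ZMod N)) :=
  {p | ∃ k : ZMod N, ∃ j < b, p = translateChord ((q : ZMod N) * k) (fanChord d N j)}

lemma fanChord_length_le {j : ℕ} (hj : j < b) : 1 + (j + 1) * (d - 1) ≤ 1 + b * (d - 1) :=
  Nat.add_le_add_left (Nat.mul_le_mul_right _ hj) 1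

lemma isDiag_fanChord (hd : 2 ≤ d) {j : ℕ} (hj : 1 + (j + 1) * (d - 1) ≤ N - 2) :
    IsDiag d N (fanChord d N j) := by
  have : d - 1 ≤ (j + 1) * (d - 1) := Nat.le_mul_of_pos_left _ j.succ_pos
  refine ⟨0, _, rfl, ?_⟩
  rw [sub_zero, ZMod.val_cast_of_lt (by omega), Nat.add_sub_cancel_left]
  exact ⟨by omega, hj, dvd_mul_left _ _⟩

lemma rot_image_rotatedFans {m : ℕ} (hqm : q ∣ m) :
    rot N m '' rotatedFans d N q b = rotatedFans d N q b := by
  obtain ⟨w, rfl⟩ := hqm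
  ext p
  constructor
  · rintro ⟨_, ⟨k, j, hj, rfl⟩, rfl⟩
    refine ⟨k - w, j, hj, ?_⟩
    rw [rot_eq_translateChord, translateChord_translateChord]
    push_cast
    ring_nf
  · rintro ⟨k, j, hj, rfl⟩
    refine ⟨_, ⟨k + w, j, hj, rfl⟩, ?_⟩
    rw [rot_eq_translateChord, translateChord_translateChord]
    push_cast
    ring_nf

lemma dvd_val_natCast_mul (hq : q ∣ N) (y : ZMod N) : q ∣ ((q : ZMod N) * y).val := by
  rw [ZMod.val_mul, Nat.dvd_mod_iff hq, ZMod.val_natCast]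
  exact dvd_mul_of_dvd_left ((Nat.dvd_mod_iff hq).2 dvd_rfl) _

lemma isDiag_of_mem_rotatedFans (hd : 2 ≤ d) (hbN : 1 + b * (d - 1) ≤ N - 2) :
    ∀ p ∈ rotatedFans d N q b, IsDiag d N p := by
  rintro _ ⟨k, j, hj, rfl⟩
  exact (isDiag_fanChord hd ((fanChord_length_le hj).trans hbN)).translateChord _

variable [NeZero N]

/-- The translate by a multiple of `q` of a chord of the fan at `0` has no endpoint strictly
inside the arc `(0, q)`, which contains every chord of the fan. -/
lemma not_crosses_fanChord_translateChord (hq : q ∣ N) (hbq : 1 + b * (d - 1) ≤ q) {j j' : ℕ}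
    (hj : j < b) (hj' : j' < b) (y : ZMod N) :
    ¬ Crosses N (fanChord d N j) (translateChord ((q : ZMod N) * y) (fanChord d N j')) := by
  set z := (q : ZMod N) * y
  rw [fanChord, fanChord, translateChord_mk, zero_add]
  by_cases hz : z = 0
  · rw [hz, add_zero]
    exact not_crosses_mk_left _ _ _
  have hzpos := (ZMod.val_ne_zero z).2 hz
  have hzq : q ≤ z.val := Nat.le_of_dvd (by omega) (dvd_val_natCast_mul hq y)
  have hzN : q ≤ N - z.val :=
    Nat.le_of_dvd (by have := ZMod.val_lt z; omega) (Nat.dvd_sub hq (dvd_val_natCast_mul hq y))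
  have hval : ∀ i < b, ((1 + (i + 1) * (d - 1) : ℕ) : ZMod N).val ≤ q := fun i hi => by
    rw [ZMod.val_natCast]
    exact (Nat.mod_le _ _).trans ((fanChord_length_le hi).trans hbq)
  have hc := hval j hj
  have hc' := hval j' hj'
  apply not_crosses_of_not_inArc
  · simp only [InArc, sub_zero]
    omega
  · simp only [InArc, sub_zero]
    rcases lt_or_ge (((1 + (j' + 1) * (d - 1) : ℕ) : ZMod N).val + z.val) N with hlt | hge
    · rw [ZMod.val_add_of_lt hlt]
      omega
    · have := ZMod.val_add_val_of_le hge
      omega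

lemma not_crosses_of_mem_rotatedFans (hq : q ∣ N) (hbq : 1 + b * (d - 1) ≤ q) :
    ∀ p ∈ rotatedFans d N q b, ∀ p' ∈ rotatedFans d N q b, ¬ Crosses N p p' := by
  rintro _ ⟨k, j, hj, rfl⟩ _ ⟨k', j', hj', rfl⟩
  rw [← crosses_translateChord_iff (-((q : ZMod N) * k)), translateChord_translateChord,
    translateChord_translateChord, add_neg_cancel, translateChord_zero,
    show (q : ZMod N) * k' + -(q * k) = q * (k' - k) by ring]
  exact not_crosses_fanChord_translateChord hq hbq hj hj' _

end Fans

section Constructions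

variable {d ℓ n N q b : ℕ} [NeZero N]

lemma translateChord_fanChord_inj (hd : 2 ≤ d) {r : ℕ} (hrq : r * q = N)
    (hbq : 1 + b * (d - 1) ≤ q) (hbN : 1 + b * (d - 1) ≤ N - 2) {k k' j j' : ℕ} (hk : k < r)
    (hk' : k' < r) (hj : j < b) (hj' : j' < b)
    (h : translateChord ((q : ZMod N) * (k : ZMod N)) (fanChord d N j) =
      translateChord ((q : ZMod N) * (k' : ZMod N)) (fanChord d N j')) :
    j = j' ∧ (k = k' ∨ 1 + (j + 1) * (d - 1) = q ∧ N ∣ 2 * q) := by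
  have hq : q ∣ N := Dvd.intro_left r hrq
  have hqpos : 0 < q := Nat.pos_of_ne_zero fun hq₀ => NeZero.ne N (by simp [← hrq, hq₀])
  have hc := fanChord_length_le (d := d) hj
  have hc' := fanChord_length_le (d := d) hj'
  have hv : ∀ x < N, ((x : ℕ) : ZMod N).val = x := fun x hx => ZMod.val_cast_of_lt hx
  have hjj : 1 + (j + 1) * (d - 1) = 1 + (j' + 1) * (d - 1) → j = j' := fun h => by
    have := Nat.eq_of_mul_eq_mul_right (show 0 < d - 1 by omega)
      (show (j + 1) * (d - 1) = (j' + 1) * (d - 1) by omega)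
    omega
  rw [fanChord, fanChord, translateChord_mk, translateChord_mk, zero_add, zero_add] at h
  rcases Sym2.eq_iff.1 h with ⟨h₁, h₂⟩ | ⟨h₁, h₂⟩
  · rw [h₁, add_left_inj] at h₂
    refine ⟨hjj ?_, Or.inl ?_⟩
    · rw [← hv (1 + (j + 1) * (d - 1)) (by omega), h₂, hv _ (by omega)]
    · have hqk : ∀ i < r, ((q : ZMod N) * i).val = q * i := fun i hi => by
        rw [← Nat.cast_mul, hv]
        rw [← hrq, mul_comm r]
        exact Nat.mul_lt_mul_of_pos_left hi hqpos
      have := congrArg ZMod.val h₁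
      rw [hqk k hk, hqk k' hk'] at this
      exact Nat.eq_of_mul_eq_mul_left hqpos this
  · have hlen : ∀ {i : ℕ}, i < b → ∀ y : ZMod N,
        ((1 + (i + 1) * (d - 1) : ℕ) : ZMod N) = q * y → 1 + (i + 1) * (d - 1) = q :=
      fun {i} hi y hy => by
        have hi' := fanChord_length_le (d := d) hi
        have := dvd_val_natCast_mul hq y
        rw [← hy, hv (1 + (i + 1) * (d - 1)) (by omega)] at this
        exact le_antisymm (hi'.trans hbq) (Nat.le_of_dvd (by omega) this)
    have e₁ := hlen hj ((k' : ZMod N) - k) (by linear_combination h₂)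
    have e₂ := hlen hj' ((k : ZMod N) - k') (by linear_combination -h₁)
    refine ⟨hjj (e₁.trans e₂.symm), Or.inr ⟨e₁, ?_⟩⟩
    have hsum : ((1 + (j + 1) * (d - 1) : ℕ) : ZMod N) + ((1 + (j' + 1) * (d - 1) : ℕ) : ZMod N)
        = 0 := by linear_combination h₂ - h₁
    rw [e₁, e₂] at hsum
    rw [← ZMod.natCast_eq_zero_iff, two_mul, Nat.cast_add, hsum]

lemma card_le_ncard_rotatedFans {S : Finset (ℕ × ℕ)} (hS : ∀ x ∈ S, x.2 < b)
    (hinj : Set.InjOn (fun x : ℕ × ℕ => translateChord ((q : ZMod N) * (x.1 : ZMod N))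
      (fanChord d N x.2)) S) :
    S.card ≤ (rotatedFans d N q b).ncard := by
  rw [← Finset.card_image_of_injOn hinj, ← Set.ncard_coe_finset]
  refine Set.ncard_le_ncard ?_ (Set.toFinite _)
  intro p hp
  obtain ⟨x, hx, rfl⟩ := Finset.mem_image.1 hp
  exact ⟨x.1, x.2, hS x hx, rfl⟩

/-- `r` congruent fans of `(ℓ - 1) / r` diagonals, at the corners `0, q, 2q, …`. -/
theorem exists_isAngulation_rot_image_eq_of_mul_eq (hd : 2 ≤ d) (hl : 2 ≤ ℓ)
    (hN : N = (d - 1) * ℓ + 2) {r : ℕ} (hrq : r * q = N) (hrd : r ∣ d + 1) (hrl : r ∣ ℓ - 1) :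
    ∃ T, IsAngulation d N T ∧ ∀ m, q ∣ m → rot N m '' T = T := by
  obtain ⟨b, hb⟩ := hrl
  have hid := sub_one_mul_sub_one_add (by omega) (by omega) hN
  have hr : 0 < r := Nat.pos_of_ne_zero (by rintro rfl; omega)
  have hb₁ : 1 ≤ b := Nat.pos_of_ne_zero (by rintro rfl; omega)
  have hrB : r * (1 + b * (d - 1)) = r + (d - 1) * (ℓ - 1) := by rw [hb]; ring
  have hrd' : r ≤ d + 1 := Nat.le_of_dvd (by omega) hrd
  have hbq : 1 + b * (d - 1) ≤ q := Nat.le_of_mul_le_mul_left (by omega) hr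
  have hbN : 1 + b * (d - 1) ≤ N - 2 := by
    have : d - 1 ≤ b * (d - 1) := Nat.le_mul_of_pos_left _ hb₁
    rcases Nat.lt_or_ge r 2 with hr₁ | hr₂
    · obtain rfl : r = 1 := by omega
      omega
    · have : 2 * (1 + b * (d - 1)) ≤ r * q :=
        (Nat.mul_le_mul_right _ hr₂).trans (Nat.mul_le_mul_left r hbq)
      omega
  refine ⟨rotatedFans d N q b, isAngulation_of_le_ncard hd hl hN
    (isDiag_of_mem_rotatedFans hd hbN) (not_crosses_of_mem_rotatedFans (Dvd.intro_left r hrq) hbq)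
    ?_, fun m hm => rot_image_rotatedFans hm⟩
  calc ℓ - 1 = (Finset.range r ×ˢ Finset.range b).card := by simp [hb]
    _ ≤ _ := card_le_ncard_rotatedFans (fun x hx => Finset.mem_range.1 (Finset.mem_product.1 hx).2)
      fun ⟨k, j⟩ hkj ⟨k', j'⟩ hkj' h => by
        simp only [Finset.coe_product, Finset.coe_range, Set.mem_prod, Set.mem_Iio] at hkj hkj'
        obtain ⟨rfl, rfl | ⟨hcq, h₂q⟩⟩ :=
          translateChord_fanChord_inj hd hrq hbq hbN hkj.1 hkj'.1 hkj.2 hkj'.2 h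
        · rfl
        · -- a longest chord of length `q` forces `r = d + 1 ≥ 3`, but `N ∣ 2 q` forces `r ≤ 2`
          have hBq : 1 + b * (d - 1) = q := le_antisymm hbq (hcq ▸ fanChord_length_le hkj.2)
          rw [hBq] at hrB
          have : r ∣ 2 := Nat.dvd_of_mul_dvd_mul_right (by omega) (hrq ▸ h₂q)
          have := Nat.le_of_dvd two_pos this
          omega

/-- A fan of `ℓ / 2` diagonals at `0`, ending in a diameter, and its image under the half-turn. -/
theorem exists_isAngulation_rot_image_eq_of_two_mul (hd : 2 ≤ d) (hl : 2 ≤ ℓ)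
    (hN : N = (d - 1) * ℓ + 2) {L : ℕ} (hL : ℓ = 2 * L) :
    ∃ T, IsAngulation d N T ∧ ∀ m, (d - 1) * L + 1 ∣ m → rot N m '' T = T := by
  have hNq : 2 * ((d - 1) * L + 1) = N := by rw [hN, hL]; ring
  have hbq : 1 + L * (d - 1) ≤ (d - 1) * L + 1 := by rw [mul_comm]; omega
  have hbN : 1 + L * (d - 1) ≤ N - 2 := by
    have : 1 * 1 ≤ (d - 1) * L := Nat.mul_le_mul (by omega) (by omega)
    rw [mul_comm]
    omega
  refine ⟨rotatedFans d N ((d - 1) * L + 1) L, isAngulation_of_le_ncard hd hl hN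
    (isDiag_of_mem_rotatedFans hd hbN)
    (not_crosses_of_mem_rotatedFans (Dvd.intro_left 2 hNq) hbq) ?_,
    fun m hm => rot_image_rotatedFans hm⟩
  calc ℓ - 1 = ((Finset.range 2 ×ˢ Finset.range L).erase (1, L - 1)).card := by
        rw [Finset.card_erase_of_mem (by simp; omega), Finset.card_product, Finset.card_range,
          Finset.card_range]
        omega
    _ ≤ _ := card_le_ncard_rotatedFans
      (fun x hx => Finset.mem_range.1 (Finset.mem_product.1 (Finset.mem_of_mem_erase hx)).2)
      fun ⟨k, j⟩ hkj ⟨k', j'⟩ hkj' h => by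
        simp only [Finset.coe_erase, Finset.coe_product, Finset.coe_range, Set.mem_sdiff,
          Set.mem_prod, Set.mem_Iio, Set.mem_singleton_iff, Prod.mk.injEq] at hkj hkj'
        obtain ⟨rfl, rfl | ⟨hcq, -⟩⟩ :=
          translateChord_fanChord_inj hd hNq hbq hbN hkj.1.1 hkj'.1.1 hkj.1.2 hkj'.1.2 h
        · rfl
        · have : (j + 1) * (d - 1) = L * (d - 1) := by
            rw [mul_comm L]
            omega
          have := Nat.eq_of_mul_eq_mul_right (show 0 < d - 1 by omega) this
          have := hkj.2
          have := hkj'.2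
          exact Prod.ext (by omega) rfl

theorem exists_isAngulation_rot_image_eq (hd : 2 ≤ d) (hl : 2 ≤ ℓ) (hN : N = (d - 1) * ℓ + 2)
    (h : N ∣ 2 * n ∨ N ∣ Nat.gcd (d + 1) (2 * (ℓ - 1)) * n) :
    ∃ T, IsAngulation d N T ∧ rot N (n * (d - 1)) '' T = T := by
  by_cases hm : N ∣ n * (d - 1)
  · obtain ⟨T, hT, hrot⟩ :=
      exists_isAngulation_rot_image_eq_of_mul_eq hd hl hN (one_mul N) (one_dvd _) (one_dvd _)
    exact ⟨T, hT, hrot _ hm⟩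
  rcases h with h₂ | ht
  · obtain ⟨L, hL⟩ := even_of_dvd_two_mul hN h₂ hm
    obtain ⟨T, hT, hrot⟩ :=
      exists_isAngulation_rot_image_eq_of_two_mul hd hl hN (L := L) (by omega)
    have hhalf : 2 * ((d - 1) * L + 1) ∣ 2 * n := by
      rwa [show 2 * ((d - 1) * L + 1) = N by rw [hN, hL]; ring]
    exact ⟨T, hT, hrot _ ((Nat.dvd_of_mul_dvd_mul_left two_pos hhalf).mul_right _)⟩
  · obtain ⟨r, q, hrq, hrd, hrl, hqm⟩ := exists_mul_eq_of_dvd_gcd_mul hd hN ht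
    obtain ⟨T, hT, hrot⟩ := exists_isAngulation_rot_image_eq_of_mul_eq hd hl hN hrq hrd hrl
    exact ⟨T, hT, hrot _ hqm⟩

end Constructions

theorem invariant_angulation_iff_general (d ℓ n N : ℕ) (hd : 2 ≤ d) (hl : 2 ≤ ℓ)
    (hN : N = (d - 1) * ℓ + 2) :
    (∃ T : Set (Sym2 (ZMod N)), IsAngulation d N T ∧ rot N (n * (d - 1)) '' T = T) ↔
      (N ∣ 2 * n ∨ N ∣ Nat.gcd (d + 1) (2 * (ℓ - 1)) * n) := by
  have : NeZero N := ⟨by omega⟩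
  exact ⟨fun ⟨T, hT, hrot⟩ => hT.dvd_of_rot_image_eq hd hl hN hrot,
    exists_isAngulation_rot_image_eq hd hl hN⟩

/-- For d >= 2, l >= 2, n >= 1, N = (d-1)l + 2 and t = gcd(d+1, 2(l-1)),
there exists a (d+1)-angulation T of the N-gon with rho^(n(d-1))(T) = T
iff N divides 2n or N divides t*n. -/
theorem invariant_angulation_iff (d ℓ n N : ℕ) (hd : 2 ≤ d) (hl : 2 ≤ ℓ) (hn : 1 ≤ n)
    (hN : N = (d - 1) * ℓ + 2) :
    (∃ T : Set (Sym2 (ZMod N)), IsAngulation d N T ∧ rot N (n * (d - 1)) '' T = T) ↔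
      (N ∣ 2 * n ∨ N ∣ Nat.gcd (d + 1) (2 * (ℓ - 1)) * n) :=
  invariant_angulation_iff_general d ℓ n N hd hl hN
end ChordFamilies
end

section
/- Fix integers d ≥ 2 and ℓ ≥ 2, set N = (d−1)ℓ + 2, and assume N is even. The following are equivalent: (1) there exists a (d+1)-angulation 𝒯 of P_N with ρ^{N/2}(𝒯) = 𝒯 that contains a diameter, i.e. a (d−1)-diagonal of the form {x, x + N/2}; (2) ℓ is even. -/
section AngAux

variable {N : ℕ}

lemma ang_val_cast_sub_le [NeZero N] {a b : ℕ} (hba : b ≤ a) (ha : a < N) :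
    ((a : ZMod N) - (b : ZMod N)).val = a - b := by
  rw [← Nat.cast_sub hba, ZMod.val_cast_of_lt (by omega)]

lemma ang_val_cast_sub_gt [NeZero N] {a b : ℕ} (hab : a < b) (hb : b < N) :
    ((a : ZMod N) - (b : ZMod N)).val = a + N - b := by
  have h1 : (a : ZMod N) - b = ((a + N - b : ℕ) : ZMod N) := by
    rw [Nat.cast_sub (by omega), Nat.cast_add, ZMod.natCast_self, add_zero]
  rw [h1, ZMod.val_cast_of_lt (by omega)]

lemma ang_val_sub_eq [NeZero N] (u v : ZMod N) :
    (u - v).val = if v.val ≤ u.val then u.val - v.val else u.val + N - v.val := by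
  have hu := ZMod.val_lt u; have hv := ZMod.val_lt v
  conv_lhs => rw [← ZMod.natCast_rightInverse u, ← ZMod.natCast_rightInverse v]
  split_ifs with h
  · exact ang_val_cast_sub_le h hu
  · exact ang_val_cast_sub_gt (by omega) hv

lemma ang_shared [NeZero N] (v w z : ZMod N) : ¬ Crosses N s(v, w) s(v, z) := by
  rintro ⟨a, b, c, e, hp, hq, ⟨h1, h2⟩, ⟨h3, h4⟩⟩
  rw [Sym2.eq_iff] at hp hq
  have hva := ZMod.val_lt a; have hvb := ZMod.val_lt b
  have hvc := ZMod.val_lt c; have hve := ZMod.val_lt e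
  rcases hp with ⟨rfl, rfl⟩ | ⟨rfl, rfl⟩ <;> rcases hq with ⟨rfl, rfl⟩ | ⟨rfl, rfl⟩ <;>
    simp only [ang_val_sub_eq] at h1 h2 h3 h4 <;> split_ifs at h1 h2 h3 h4 <;> omega

lemma ang_shared2 [NeZero N] (v w z : ZMod N) : ¬ Crosses N s(v, w) s(z, v) := by
  rw [show s(z, v) = s(v, z) from Sym2.eq_swap]; exact ang_shared v w z

lemma ang_sep [NeZero N] (b c e : ZMod N) (hc : b.val ≤ c.val) (he : b.val ≤ e.val) :
    ¬ Crosses N s((0 : ZMod N), b) s(c, e) := by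
  rintro ⟨a', b', c', e', hp, hq, ⟨h1, h2⟩, ⟨h3, h4⟩⟩
  rw [Sym2.eq_iff] at hp hq
  have hvb := ZMod.val_lt b; have hvc := ZMod.val_lt c; have hve := ZMod.val_lt e
  have hz : (0 : ZMod N).val = 0 := ZMod.val_zero
  rcases hp with ⟨rfl, rfl⟩ | ⟨rfl, rfl⟩ <;> rcases hq with ⟨rfl, rfl⟩ | ⟨rfl, rfl⟩ <;>
    simp only [ang_val_sub_eq] at h1 h2 h3 h4 <;> split_ifs at h1 h2 h3 h4 <;> omega

lemma ang_symm [NeZero N] {p q : Sym2 (ZMod N)} (h : Crosses N p q) : Crosses N q p := by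
  obtain ⟨a, b, c, e, hp, hq, ⟨h1, h2⟩, ⟨h3, h4⟩⟩ := h
  have hva := ZMod.val_lt a; have hvb := ZMod.val_lt b
  have hvc := ZMod.val_lt c; have hve := ZMod.val_lt e
  refine ⟨c, e, b, a, hq, hp.trans (Sym2.eq_swap), ⟨?_, ?_⟩, ?_, ?_⟩ <;>
    simp only [ang_val_sub_eq] at h1 h2 h3 h4 ⊢ <;> split_ifs at h1 h2 h3 h4 ⊢ <;> omega

lemma ang_shift [NeZero N] (t : ZMod N) {p q : Sym2 (ZMod N)} (hc : Crosses N p q) :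
    Crosses N (Sym2.map (· - t) p) (Sym2.map (· - t) q) := by
  obtain ⟨a, b, c, e, hp, hq, ⟨h1, h2⟩, ⟨h3, h4⟩⟩ := hc
  refine ⟨a - t, b - t, c - t, e - t, by rw [hp, Sym2.map_pair_eq],
    by rw [hq, Sym2.map_pair_eq], ⟨?_, ?_⟩, ?_, ?_⟩ <;>
    simpa only [sub_sub_sub_cancel_right] using ‹_›

lemma ang_unshift [NeZero N] (t : ZMod N) {p q : Sym2 (ZMod N)}
    (hc : Crosses N (Sym2.map (· - t) p) (Sym2.map (· - t) q)) : Crosses N p q := by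
  have h2 := ang_shift (-t) hc
  have hmap : ∀ r : Sym2 (ZMod N), Sym2.map (· - (-t)) (Sym2.map (· - t) r) = r := by
    intro r
    rw [Sym2.map_map]
    have hfun : ((· - (-t)) ∘ (· - t) : ZMod N → ZMod N) = id := by
      funext x; simp
    rw [hfun, Sym2.map_id]
    rfl
  rwa [hmap, hmap] at h2

/-- The symmetric double-fan `(d+1)`-angulation. -/
def Tset (m h N : ℕ) : Set (Sym2 (ZMod N)) :=
  {p | ∃ k, 1 ≤ k ∧ k ≤ h ∧
    (p = s((0 : ZMod N), ((m * k + 1 : ℕ) : ZMod N)) ∨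
      p = s(((m * h + 1 : ℕ) : ZMod N), ((m * h + 1 + (m * k + 1) : ℕ) : ZMod N)))}

lemma ang_half [NeZero N] {m h : ℕ} (hm : 1 ≤ m) (hNeq : N = 2 * (m * h + 1)) (a b : ℕ)
    (hab : a < b) (hbn : b ≤ m * h + 1) (h2ab : 2 ≤ b - a) (hdvd : m ∣ (b - a - 1))
    (hnc : ∀ k, 1 ≤ k → k ≤ h →
      ¬ Crosses N s((0 : ZMod N), ((m * k + 1 : ℕ) : ZMod N)) s((a : ZMod N), (b : ZMod N))) :
    a = 0 := by
  by_contra ha0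
  obtain ⟨t, ht⟩ := hdvd
  have ht1 : t ≠ 0 := by rintro rfl; simp at ht; omega
  have htm : m ≤ m * t := Nat.le_mul_of_pos_right m (by omega)
  set q := (a - 1) / m with hq
  have hdm : m * q + (a - 1) % m = a - 1 := by rw [hq]; exact Nat.div_add_mod _ _
  have hr : (a - 1) % m < m := Nat.mod_lt _ (by omega)
  set k := q + 1 with hk
  have hck : m * k = m * q + m := by ring
  have hac : a < m * k + 1 := by omega
  have hcb : m * k + 1 ≤ b - 1 := by omega
  have hkh : k ≤ h := by
    by_contra hkh
    have h1 : m * (h + 1) ≤ m * k := Nat.mul_le_mul_left m (by omega)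
    have h2 : m * (h + 1) = m * h + m := by ring
    omega
  have hvz : (0 : ZMod N).val = 0 := ZMod.val_zero
  have hva : ((a : ℕ) : ZMod N).val = a := ZMod.val_cast_of_lt (by omega)
  have hvb : ((b : ℕ) : ZMod N).val = b := ZMod.val_cast_of_lt (by omega)
  have hvc : ((m * k + 1 : ℕ) : ZMod N).val = m * k + 1 := ZMod.val_cast_of_lt (by omega)
  have hk1 : 1 ≤ k := hk ▸ Nat.le_add_left 1 q
  have hcross : Crosses N s((0 : ZMod N), ((m * k + 1 : ℕ) : ZMod N))
      s((a : ZMod N), (b : ZMod N)) := by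
    refine ⟨0, ((m * k + 1 : ℕ) : ZMod N), (a : ZMod N), (b : ZMod N), rfl, rfl,
      ⟨?_, ?_⟩, ?_, ?_⟩ <;>
      simp only [ang_val_sub_eq, hva, hvb, hvc, hvz] <;> split_ifs <;> omega
  exact hnc k hk1 hkh hcross

end AngAux

section AngAux2

variable {N : ℕ}

lemma ang_mixed [NeZero N] {m h : ℕ} (hm : 1 ≤ m) (hh : 1 ≤ h) (hNeq : N = 2 * (m * h + 1))
    (k j : ℕ) (hkh : k ≤ h) (hjh : j ≤ h) :
    ¬ Crosses N s((0 : ZMod N), ((m * k + 1 : ℕ) : ZMod N))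
      s(((m * h + 1 : ℕ) : ZMod N), ((m * h + 1 + (m * j + 1) : ℕ) : ZMod N)) := by
  have hmk : m * k ≤ m * h := Nat.mul_le_mul_left m hkh
  rcases eq_or_lt_of_le hjh with heq | hjh'
  · subst heq
    have hNN : ((m * j + 1 + (m * j + 1) : ℕ) : ZMod N) = (0 : ZMod N) := by
      rw [show m * j + 1 + (m * j + 1) = N by omega, ZMod.natCast_self]
    rw [hNN]
    exact ang_shared2 _ _ _
  · have hmj : m * (j + 1) ≤ m * h := Nat.mul_le_mul_left m (by omega)
    have hmj2 : m * (j + 1) = m * j + m := by ring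
    refine ang_sep _ _ _ ?_ ?_
    · rw [ZMod.val_cast_of_lt (by omega), ZMod.val_cast_of_lt (by omega)]; omega
    · rw [ZMod.val_cast_of_lt (by omega), ZMod.val_cast_of_lt (by omega)]; omega

lemma ang_tpair [NeZero N] {m h : ℕ} (hm : 1 ≤ m) (hh : 1 ≤ h) (hNeq : N = 2 * (m * h + 1)) :
    ∀ p ∈ Tset m h N, ∀ q ∈ Tset m h N, ¬ Crosses N p q := by
  rintro p ⟨k, hk1, hkh, hp | hp⟩ q ⟨j, hj1, hjh, hq | hq⟩ <;> subst hp <;> subst hq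
  · exact ang_shared _ _ _
  · exact ang_mixed hm hh hNeq k j hkh hjh
  · exact fun hc => ang_mixed hm hh hNeq j k hjh hkh (ang_symm hc)
  · exact ang_shared _ _ _

lemma ang_tdiag [NeZero N] {d m h : ℕ} (hm : 1 ≤ m) (hh : 1 ≤ h) (hNeq : N = 2 * (m * h + 1))
    (hdm : d - 1 = m) : ∀ p ∈ Tset m h N, IsDiag d N p := by
  have hmh : 1 ≤ m * h := by have := Nat.mul_le_mul hm hh; omega
  rintro p ⟨k, hk1, hkh, hp | hp⟩ <;> subst hp
  · have hmk : m * k ≤ m * h := Nat.mul_le_mul_left m hkh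
    have hmk1 : m * 1 ≤ m * k := Nat.mul_le_mul_left m hk1
    have hm1 : m * 1 = m := by ring
    refine ⟨0, ((m * k + 1 : ℕ) : ZMod N), rfl, ?_, ?_, ?_⟩ <;>
        rw [sub_zero, ZMod.val_cast_of_lt (by omega)]
    · omega
    · omega
    · rw [hdm]; exact ⟨k, by omega⟩
  · have hmk : m * k ≤ m * h := Nat.mul_le_mul_left m hkh
    have hmk1 : m * 1 ≤ m * k := Nat.mul_le_mul_left m hk1
    have hm1 : m * 1 = m := by ring
    have hsub : ((m * h + 1 + (m * k + 1) : ℕ) : ZMod N) - ((m * h + 1 : ℕ) : ZMod N)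
        = ((m * k + 1 : ℕ) : ZMod N) := by
      rw [Nat.cast_add]; ring
    refine ⟨((m * h + 1 : ℕ) : ZMod N), ((m * h + 1 + (m * k + 1) : ℕ) : ZMod N), rfl,
      ?_, ?_, ?_⟩ <;> rw [hsub, ZMod.val_cast_of_lt (by omega)]
    · omega
    · omega
    · rw [hdm]; exact ⟨k, by omega⟩

lemma ang_tmem [NeZero N] {d m h : ℕ} (hm : 1 ≤ m) (hh : 1 ≤ h) (hNeq : N = 2 * (m * h + 1))
    (hdm : d - 1 = m) (p : Sym2 (ZMod N)) (hdiag : IsDiag d N p)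
    (hnc : ∀ q ∈ Tset m h N, ¬ Crosses N q p) : p ∈ Tset m h N := by
  have hmh : 1 ≤ m * h := by have := Nat.mul_le_mul hm hh; omega
  obtain ⟨x, y, rfl, hu2, huN, hudvd⟩ := hdiag
  rw [hdm] at hudvd
  have hvx := ZMod.val_lt x; have hvy := ZMod.val_lt y
  have hN2dvd : m ∣ N - 2 := by
    refine ⟨2 * h, ?_⟩
    have e : m * (2 * h) = 2 * (m * h) := by ring
    omega
  obtain ⟨a, b, hpab, hab, hbN, h2ab, habN, hdvd⟩ :
      ∃ a b : ℕ, s(x, y) = s((a : ZMod N), (b : ZMod N)) ∧ a < b ∧ b < N ∧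
        2 ≤ b - a ∧ b - a ≤ N - 2 ∧ m ∣ (b - a - 1) := by
    rcases le_or_gt x.val y.val with hle | hlt
    · rw [ang_val_sub_eq, if_pos hle] at hu2 huN hudvd
      exact ⟨x.val, y.val, by rw [ZMod.natCast_rightInverse x, ZMod.natCast_rightInverse y],
        by omega, hvy, hu2, huN, hudvd⟩
    · rw [ang_val_sub_eq, if_neg (not_le.mpr hlt)] at hu2 huN hudvd
      refine ⟨y.val, x.val, ?_, hlt, hvx, by omega, by omega, ?_⟩
      · rw [ZMod.natCast_rightInverse x, ZMod.natCast_rightInverse y]; exact Sym2.eq_swap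
      · have h3 := Nat.dvd_sub hN2dvd hudvd
        have heq : N - 2 - (y.val + N - x.val - 1) = x.val - y.val - 1 := by omega
        rwa [heq] at h3
  rw [hpab] at hnc ⊢
  clear hpab hu2 huN hudvd hvx hvy
  have hvza : (0 : ZMod N).val = 0 := ZMod.val_zero
  have hva : ((a : ℕ) : ZMod N).val = a := ZMod.val_cast_of_lt (by omega)
  have hvb : ((b : ℕ) : ZMod N).val = b := ZMod.val_cast_of_lt (by omega)
  have hvn : ((m * h + 1 : ℕ) : ZMod N).val = m * h + 1 := ZMod.val_cast_of_lt (by omega)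
  have hdiam : s((0 : ZMod N), ((m * h + 1 : ℕ) : ZMod N)) ∈ Tset m h N :=
    ⟨h, hh, le_refl h, Or.inl rfl⟩
  have hsep : ¬ (0 < a ∧ a < m * h + 1 ∧ m * h + 1 < b) := by
    rintro ⟨h1, h2, h3⟩
    refine hnc _ hdiam ⟨0, ((m * h + 1 : ℕ) : ZMod N), (a : ZMod N), (b : ZMod N), rfl, rfl,
      ⟨?_, ?_⟩, ?_, ?_⟩ <;>
      simp only [ang_val_sub_eq, hva, hvb, hvn, hvza] <;> split_ifs <;> omega
  have hnn0 : ((m * h + 1 : ℕ) : ZMod N) + ((m * h + 1 : ℕ) : ZMod N) = 0 := by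
    rw [← Nat.cast_add, show m * h + 1 + (m * h + 1) = N by omega, ZMod.natCast_self]
  rcases le_or_gt b (m * h + 1) with hbn | hbn
  · -- Case A : both endpoints in the half [0, n]
    have ha0 : a = 0 :=
      ang_half hm hNeq a b hab hbn h2ab hdvd
        (fun k hk1 hkh hc => hnc _ ⟨k, hk1, hkh, Or.inl rfl⟩ hc)
    subst ha0
    obtain ⟨k, hkk⟩ : m ∣ b - 1 := by simpa using hdvd
    have hk1 : 1 ≤ k := by
      rcases Nat.eq_zero_or_pos k with rfl | h' 
      · simp at hkk; omega
      · exact h'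
    have hkh : k ≤ h := by
      by_contra hkh
      have h1 : m * (h + 1) ≤ m * k := Nat.mul_le_mul_left m (by omega)
      have h2 : m * (h + 1) = m * h + m := by ring
      omega
    refine ⟨k, hk1, hkh, Or.inl ?_⟩
    rw [show ((0 : ℕ) : ZMod N) = (0 : ZMod N) from Nat.cast_zero, show b = m * k + 1 by omega]
  · rcases Nat.eq_zero_or_pos a with ha0 | ha0
    · -- Case C : a = 0, n < b : impossible
      exfalso
      subst ha0
      have hcb : ((b : ℕ) : ZMod N) - ((m * h + 1 : ℕ) : ZMod N)
          = ((b - (m * h + 1) : ℕ) : ZMod N) := (Nat.cast_sub (by omega)).symm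
      have hc0 : ((0 : ℕ) : ZMod N) - ((m * h + 1 : ℕ) : ZMod N)
          = ((m * h + 1 : ℕ) : ZMod N) := by
        rw [Nat.cast_zero, zero_sub]; exact neg_eq_of_add_eq_zero_left hnn0
      have hnc' : ∀ k, 1 ≤ k → k ≤ h → ¬ Crosses N
          s((0 : ZMod N), ((m * k + 1 : ℕ) : ZMod N))
          s(((b - (m * h + 1) : ℕ) : ZMod N), ((m * h + 1 : ℕ) : ZMod N)) := by
        intro k hk1 hkh hc
        apply hnc _ ⟨k, hk1, hkh, Or.inr rfl⟩
        apply ang_unshift ((m * h + 1 : ℕ) : ZMod N)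
        have e1 : Sym2.map (· - ((m * h + 1 : ℕ) : ZMod N))
            s(((m * h + 1 : ℕ) : ZMod N), ((m * h + 1 + (m * k + 1) : ℕ) : ZMod N))
            = s((0 : ZMod N), ((m * k + 1 : ℕ) : ZMod N)) := by
          rw [Sym2.map_pair_eq, sub_self, Nat.cast_add, add_sub_cancel_left]
        have e2 : Sym2.map (· - ((m * h + 1 : ℕ) : ZMod N))
            s(((0 : ℕ) : ZMod N), ((b : ℕ) : ZMod N))
            = s(((b - (m * h + 1) : ℕ) : ZMod N), ((m * h + 1 : ℕ) : ZMod N)) := by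
          rw [Sym2.map_pair_eq, hc0, hcb]; exact Sym2.eq_swap
        rw [e1, e2]; exact hc
      have hdvb : m ∣ b - 1 := by simpa using hdvd
      have hdv' : m ∣ (m * h + 1) - (b - (m * h + 1)) - 1 := by
        have h3 := Nat.dvd_sub hN2dvd hdvb
        have heq : N - 2 - (b - 1) = (m * h + 1) - (b - (m * h + 1)) - 1 := by omega
        rwa [heq] at h3
      have := ang_half hm hNeq (b - (m * h + 1)) (m * h + 1) (by omega) (le_refl _)
        (by omega) hdv' hnc'
      omega
    · -- Case B : both endpoints in the half [n, 2n]
      have han : m * h + 1 ≤ a := by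
        by_contra hcon; exact hsep ⟨by omega, by omega, hbn⟩
      have hca : ((a : ℕ) : ZMod N) - ((m * h + 1 : ℕ) : ZMod N)
          = ((a - (m * h + 1) : ℕ) : ZMod N) := (Nat.cast_sub han).symm
      have hcb : ((b : ℕ) : ZMod N) - ((m * h + 1 : ℕ) : ZMod N)
          = ((b - (m * h + 1) : ℕ) : ZMod N) := (Nat.cast_sub (by omega)).symm
      have hnc' : ∀ k, 1 ≤ k → k ≤ h → ¬ Crosses N
          s((0 : ZMod N), ((m * k + 1 : ℕ) : ZMod N))
          s(((a - (m * h + 1) : ℕ) : ZMod N), ((b - (m * h + 1) : ℕ) : ZMod N)) := by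
        intro k hk1 hkh hc
        apply hnc _ ⟨k, hk1, hkh, Or.inr rfl⟩
        apply ang_unshift ((m * h + 1 : ℕ) : ZMod N)
        have e1 : Sym2.map (· - ((m * h + 1 : ℕ) : ZMod N))
            s(((m * h + 1 : ℕ) : ZMod N), ((m * h + 1 + (m * k + 1) : ℕ) : ZMod N))
            = s((0 : ZMod N), ((m * k + 1 : ℕ) : ZMod N)) := by
          rw [Sym2.map_pair_eq, sub_self, Nat.cast_add, add_sub_cancel_left]
        have e2 : Sym2.map (· - ((m * h + 1 : ℕ) : ZMod N))
            s(((a : ℕ) : ZMod N), ((b : ℕ) : ZMod N))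
            = s(((a - (m * h + 1) : ℕ) : ZMod N), ((b - (m * h + 1) : ℕ) : ZMod N)) := by
          rw [Sym2.map_pair_eq, hca, hcb]
        rw [e1, e2]; exact hc
      have hdv' : m ∣ (b - (m * h + 1)) - (a - (m * h + 1)) - 1 := by
        have heq : (b - (m * h + 1)) - (a - (m * h + 1)) - 1 = b - a - 1 := by omega
        rwa [heq]
      have ha' := ang_half hm hNeq (a - (m * h + 1)) (b - (m * h + 1)) (by omega)
        (by omega) (by omega) hdv' hnc'
      have haeq : a = m * h + 1 := by omega
      obtain ⟨k, hkk⟩ : m ∣ (b - (m * h + 1)) - 1 := by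
        have heq : (b - (m * h + 1)) - 1 = (b - (m * h + 1)) - (a - (m * h + 1)) - 1 := by omega
        rw [heq]; exact hdv'
      have hk1 : 1 ≤ k := by
        rcases Nat.eq_zero_or_pos k with rfl | h'
        · simp at hkk; omega
        · exact h'
      have hkh : k ≤ h := by
        by_contra hkh
        have h1 : m * (h + 1) ≤ m * k := Nat.mul_le_mul_left m (by omega)
        have h2 : m * (h + 1) = m * h + m := by ring
        omega
      refine ⟨k, hk1, hkh, Or.inr ?_⟩
      rw [show a = m * h + 1 from haeq, show b = m * h + 1 + (m * k + 1) by omega]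

end AngAux2

/-- For d >= 2, l >= 2 and N = (d-1)l + 2 even, there exists a
(d+1)-angulation T of the N-gon with rho^(N/2)(T) = T containing a diameter
{x, x + N/2}, iff l is even. -/
theorem invariant_angulation_with_diameter_iff (d ℓ N : ℕ) (hd : 2 ≤ d) (hl : 2 ≤ ℓ)
    (hN : N = (d - 1) * ℓ + 2) (hNe : Even N) :
    (∃ T : Set (Sym2 (ZMod N)), IsAngulation d N T ∧ rot N (N / 2) '' T = T ∧
        ∃ x : ZMod N, s(x, x + ((N / 2 : ℕ) : ZMod N)) ∈ T) ↔
      Even ℓ := by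
  have hm : 1 ≤ d - 1 := by omega
  have hml : 1 * 1 ≤ (d - 1) * ℓ := Nat.mul_le_mul hm (by omega)
  haveI : NeZero N := ⟨by omega⟩
  constructor
  · rintro ⟨T, hT, _, x, hxT⟩
    obtain ⟨x', y', hs, hu2, huN, hudvd⟩ := hT.1 _ hxT
    obtain ⟨c, hc⟩ := hNe
    have hhalf : ((N / 2 : ℕ) : ZMod N).val = N / 2 := ZMod.val_cast_of_lt (by omega)
    have hkey : (y' - x').val = N / 2 := by
      rw [Sym2.eq_iff] at hs
      rcases hs with ⟨h1, h2⟩ | ⟨h1, h2⟩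
      · rw [← h2, ← h1, add_sub_cancel_left, hhalf]
      · rw [← h1, ← h2]
        have hcc : ((N / 2 : ℕ) : ZMod N) + ((N / 2 : ℕ) : ZMod N) = 0 := by
          rw [← Nat.cast_add, show N / 2 + N / 2 = N by omega, ZMod.natCast_self]
        have e : x - (x + ((N / 2 : ℕ) : ZMod N)) = ((N / 2 : ℕ) : ZMod N) := by
          rw [sub_add_eq_sub_sub, sub_self, zero_sub]
          exact neg_eq_of_add_eq_zero_left hcc
        rw [e, hhalf]
    rw [hkey] at hudvd
    obtain ⟨t, ht⟩ := hudvd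
    have h2 : (d - 1) * ℓ = 2 * ((d - 1) * t) := by omega
    have h3 : (d - 1) * (2 * t) = (d - 1) * ℓ := by rw [h2]; ring
    have hl2 : 2 * t = ℓ := Nat.eq_of_mul_eq_mul_left (by omega) h3
    exact ⟨t, by omega⟩
  · rintro ⟨h, hℓ⟩
    have hh1 : 1 ≤ h := by omega
    have hNeq : N = 2 * ((d - 1) * h + 1) := by
      rw [hℓ] at hN
      have e : (d - 1) * (h + h) = 2 * ((d - 1) * h) := by ring
      omega
    have hc2 : ((N / 2 : ℕ) : ZMod N) = (((d - 1) * h + 1 : ℕ) : ZMod N) := by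
      rw [show N / 2 = (d - 1) * h + 1 by omega]
    have hnn0 : (((d - 1) * h + 1 : ℕ) : ZMod N) + (((d - 1) * h + 1 : ℕ) : ZMod N) = 0 := by
      rw [← Nat.cast_add, show (d - 1) * h + 1 + ((d - 1) * h + 1) = N by omega,
        ZMod.natCast_self]
    have hneg : -(((d - 1) * h + 1 : ℕ) : ZMod N) = (((d - 1) * h + 1 : ℕ) : ZMod N) :=
      neg_eq_of_add_eq_zero_left hnn0
    have hrot : ∀ p ∈ Tset (d - 1) h N, rot N (N / 2) p ∈ Tset (d - 1) h N := by
      rintro p ⟨k, hk1, hkh, hp | hp⟩ <;> subst hp <;>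
        simp only [rot] <;> rw [hc2, Sym2.map_pair_eq]
      · refine ⟨k, hk1, hkh, Or.inr ?_⟩
        have e1 : (0 : ZMod N) - (((d - 1) * h + 1 : ℕ) : ZMod N)
            = (((d - 1) * h + 1 : ℕ) : ZMod N) := by rw [zero_sub, hneg]
        have e2 : (((d - 1) * k + 1 : ℕ) : ZMod N) - (((d - 1) * h + 1 : ℕ) : ZMod N)
            = (((d - 1) * h + 1 + ((d - 1) * k + 1) : ℕ) : ZMod N) := by
          rw [sub_eq_add_neg, hneg, ← Nat.cast_add, Nat.add_comm]
        rw [e1, e2]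
      · refine ⟨k, hk1, hkh, Or.inl ?_⟩
        have e1 : (((d - 1) * h + 1 : ℕ) : ZMod N) - (((d - 1) * h + 1 : ℕ) : ZMod N)
            = (0 : ZMod N) := sub_self _
        have e2 : (((d - 1) * h + 1 + ((d - 1) * k + 1) : ℕ) : ZMod N)
            - (((d - 1) * h + 1 : ℕ) : ZMod N) = (((d - 1) * k + 1 : ℕ) : ZMod N) := by
          rw [Nat.cast_add, add_sub_cancel_left]
        rw [e1, e2]
    refine ⟨Tset (d - 1) h N,
      ⟨ang_tdiag hm hh1 hNeq rfl, ang_tpair hm hh1 hNeq, ?_⟩, ?_, 0, ?_⟩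
    · intro S hSd hSc hTS
      refine Set.Subset.antisymm (fun p hp => ?_) hTS
      exact ang_tmem hm hh1 hNeq rfl p (hSd p hp) (fun q hq => hSc q (hTS hq) p hp)
    · have hrr : ∀ p : Sym2 (ZMod N), rot N (N / 2) (rot N (N / 2) p) = p := by
        intro p
        simp only [rot, Sym2.map_map]
        have e : ((fun x : ZMod N => x - ((N / 2 : ℕ) : ZMod N))
            ∘ (fun x : ZMod N => x - ((N / 2 : ℕ) : ZMod N))) = id := by
          funext x
          simp only [Function.comp_apply, id_eq]
          rw [hc2, sub_sub, hnn0, sub_zero]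
        rw [e, Sym2.map_id]
        rfl
      refine Set.ext (fun p => ⟨?_, ?_⟩)
      · rintro ⟨q, hq, rfl⟩; exact hrot q hq
      · intro hp; exact ⟨rot N (N / 2) p, hrot p hp, hrr p⟩
    · rw [zero_add, hc2]
      exact ⟨h, hh1, le_refl h, Or.inl rfl⟩
end

section
/- Fix integers d ≥ 2, ℓ ≥ 2 and n ≥ 1, and set N = (d−1)ℓ + 2. The following are equivalent: (1) there exist a (d+1)-angulation 𝒯 of P_N and a (d+1)-angle G of 𝒯 such that ρ^{n(d−1)}(𝒯) = 𝒯 and ρ^{n(d−1)}(G) = G; (2) N divides n·gcd(d+1, 2(ℓ−1)). -/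
/-!
If `G` is an angle, the gap from each corner of `G` to the next one is `1` or the length of a
diagonal, hence of the form `1 + (d − 1)·m`. The gaps add up to `N = (d − 1)(ℓ − 1) + (d + 1)`, so
the `m`'s add up to `ℓ − 1`. Rotation by `k` preserves them and permutes `G` in orbits of size
`r = addOrderOf k`, so `r ∣ ℓ − 1`, i.e. `N ∣ k(ℓ − 1)`; for `k = n(d − 1)` this is the
arithmetic condition.

Conversely, `r` then divides both `d + 1 = r·s` and `ℓ − 1 = r·q`. Cut the polygon into `r` blocks
of `c = N / r = s + (d − 1)q` corners. The first `s` corners of every block form the angle, and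
from the last of them a fan of `q` diagonals of lengths `(d − 1)t + 1` reaches the first corner of
the next block. Both are invariant under rotation by `c`, which divides `k`. The fans are maximal:
a diagonal with an endpoint inside a fan crosses a fan diagonal or lies between two consecutive
ones, where there is no room for it, and two corners of the angle only span the longest fan
diagonals.
-/

namespace ZMod

variable {N : ℕ} [NeZero N]

theorem val_sub_comm {x y : ZMod N} (h : x ≠ y) : (x - y).val = N - (y - x).val := by
  rw [← neg_sub, neg_val, if_neg (sub_ne_zero.mpr h.symm)]

theorem val_sub_sub {x y a : ZMod N} (h : (x - a).val ≤ (y - a).val) :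
    (y - x).val = (y - a).val - (x - a).val := by
  rw [← val_sub h, sub_sub_sub_cancel_right]

theorem val_add_natCast_mod {c : ℕ} (hc : c ∣ N) (x : ZMod N) (m : ℕ) :
    (x + m).val % c = (x.val % c + m) % c := by
  rw [val_add, val_natCast, Nat.mod_mod_of_dvd _ hc]
  simp [Nat.add_mod, Nat.mod_mod_of_dvd _ hc]

theorem val_sub_natCast_mod {c k : ℕ} (hc : c ∣ N) (hk : c ∣ k) (x : ZMod N) :
    (x - k).val % c = x.val % c := by
  obtain ⟨j, rfl⟩ := hk
  have := val_add_natCast_mod hc (x - (c * j : ℕ)) (c * j)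
  rwa [sub_add_cancel, Nat.add_mul_mod_self_left, Nat.mod_mod, eq_comm] at this

theorem add_val_sub (x a : ZMod N) : a + ((x - a).val : ZMod N) = x := by
  rw [natCast_zmod_val, add_sub_cancel]

end ZMod

section Crossing

variable {N : ℕ}

theorem not_crosses_of_mem {p q : Sym2 (ZMod N)} {v : ZMod N} (hp : v ∈ p) (hq : v ∈ q) :
    ¬ Crosses N p q := by
  rintro ⟨a, b, c, e, rfl, rfl, hc, he⟩
  have not_left : ∀ u w : ZMod N, ¬ InArc N u w u := fun u w h => by simp [InArc] at h
  have not_right : ∀ u w : ZMod N, ¬ InArc N u w w := fun u w h => lt_irrefl _ h.2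
  rcases Sym2.mem_iff.mp hp with rfl | rfl <;> rcases Sym2.mem_iff.mp hq with h | h <;> subst h
  exacts [not_left _ _ hc, not_right _ _ he, not_right _ _ hc, not_left _ _ he]

theorem not_crosses_of_not_inArc_s11 {a b z w : ZMod N} (hz : ¬ InArc N a b z)
    (hw : ¬ InArc N a b w) : ¬ Crosses N s(a, b) s(z, w) := by
  rintro ⟨a', b', z', w', hab, hzw, h₁, h₂⟩
  rcases Sym2.eq_iff.mp hab with ⟨rfl, rfl⟩ | ⟨rfl, rfl⟩ <;>
    rcases Sym2.eq_iff.mp hzw with ⟨rfl, rfl⟩ | ⟨rfl, rfl⟩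
  exacts [hz h₁, hw h₁, hw h₂, hz h₂]

variable [NeZero N]

theorem crosses_mk_add {a z w : ZMod N} {m : ℕ} (hmN : m < N) (hz : 0 < (z - a).val)
    (hzm : (z - a).val < m) (hmw : m < (w - a).val) : Crosses N s(a, a + m) s(z, w) := by
  have hm : ((m : ℕ) : ZMod N).val = m := ZMod.val_natCast_of_lt hmN
  refine ⟨a, a + m, z, w, rfl, rfl, ⟨hz, by rwa [add_sub_cancel_left, hm]⟩, ?_⟩
  have hw : (w - (a + m)).val = (w - a).val - m := by
    rw [sub_add_eq_sub_sub, ZMod.val_sub (by omega), hm]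
  have hneg : (a - (a + m)).val = N - m := by
    rw [sub_add_cancel_left, ZMod.neg_val, if_neg, hm]
    rintro h
    rw [h, ZMod.val_zero] at hm
    omega
  have := (w - a).val_lt
  exact ⟨by omega, by rw [hw, hneg]; omega⟩

end Crossing

def IsDiagLength (d N m : ℕ) : Prop :=
  2 ≤ m ∧ m ≤ N - 2 ∧ (d - 1) ∣ m - 1

theorem IsDiagLength.le {d N m : ℕ} (h : IsDiagLength d N m) : d ≤ m := by
  obtain ⟨h2, -, e, he⟩ := h
  rcases e with _ | e
  · omega
  · have : d - 1 ≤ (d - 1) * (e + 1) := Nat.le_mul_of_pos_right _ e.succ_pos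
    omega

theorem IsDiagLength.sub {d N m : ℕ} (hN : (d - 1) ∣ N - 2) (h : IsDiagLength d N m) :
    IsDiagLength d N (N - m) := by
  obtain ⟨h2, hm, hd⟩ := h
  refine ⟨by omega, by omega, ?_⟩
  have : N - m - 1 = (N - 2) - (m - 1) := by omega
  exact this ▸ Nat.dvd_sub hN hd

theorem isDiag_mk_iff {d N : ℕ} [NeZero N] (hN : (d - 1) ∣ N - 2) {x y : ZMod N} :
    IsDiag d N s(x, y) ↔ IsDiagLength d N (y - x).val := by
  refine ⟨fun ⟨x', y', hxy, h⟩ => ?_, fun h => ⟨x, y, rfl, h⟩⟩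
  rcases Sym2.eq_iff.mp hxy with ⟨rfl, rfl⟩ | ⟨rfl, rfl⟩
  · exact h
  · have hne : x ≠ y := by rintro rfl; simp at h
    rw [ZMod.val_sub_comm hne.symm]
    exact IsDiagLength.sub hN h

theorem sub_one_mul_add_two_eq {d ℓ : ℕ} (hd : 1 ≤ d) (hl : 1 ≤ ℓ) :
    (d - 1) * ℓ + 2 = (d - 1) * (ℓ - 1) + (d + 1) := by
  rw [Nat.mul_sub_one]
  have := Nat.mul_le_mul_left (d - 1) hl
  omega

theorem dvd_mul_sub_one_mul_iff {N d ℓ n : ℕ} (hd : 1 ≤ d)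
    (hN : N = (d - 1) * (ℓ - 1) + (d + 1)) :
    N ∣ n * (d - 1) * (ℓ - 1) ↔ N ∣ n * Nat.gcd (d + 1) (2 * (ℓ - 1)) := by
  obtain ⟨a, rfl⟩ : ∃ a, d = a + 1 := ⟨d - 1, by omega⟩
  rw [Nat.add_sub_cancel] at hN ⊢
  have h_add : N ∣ n * a * (ℓ - 1) + n * (a + 1 + 1) := ⟨n, by rw [hN]; ring⟩
  have h_two : n * (2 * (ℓ - 1)) + (ℓ - 1 + 1) * (n * a * (ℓ - 1)) = N * (n * (ℓ - 1)) := by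
    rw [hN]; ring
  constructor
  · intro h
    have h₁ : N ∣ n * (a + 1 + 1) := (Nat.dvd_add_right h).mp h_add
    have h₂ : N ∣ n * (2 * (ℓ - 1)) :=
      (Nat.dvd_add_left (dvd_mul_of_dvd_right h _)).mp (h_two ▸ dvd_mul_right _ _)
    simpa [Nat.gcd_mul_left] using Nat.dvd_gcd h₁ h₂
  · intro h
    exact (Nat.dvd_add_left (h.trans (mul_dvd_mul_left n (Nat.gcd_dvd_left _ _)))).mp h_add

theorem addOrderOf_natCast_dvd_iff {N : ℕ} (k m : ℕ) :
    addOrderOf (k : ZMod N) ∣ m ↔ N ∣ k * m := by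
  rw [addOrderOf_dvd_iff_nsmul_eq_zero, nsmul_eq_mul, ← Nat.cast_mul, mul_comm,
    ZMod.natCast_eq_zero_iff]

namespace Finset

variable {N : ℕ} {G : Finset (ZMod N)}

noncomputable def gap (G : Finset (ZMod N)) (x : ZMod N) : ℕ :=
  sInf {m : ℕ | 0 < m ∧ x + m ∈ G}

theorem gap_add {t : ZMod N} (ht : ∀ y, y + t ∈ G ↔ y ∈ G) (x : ZMod N) :
    G.gap (x + t) = G.gap x := by
  simp only [gap, add_right_comm x t, ht]

variable [NeZero N]

theorem gap_spec (hG : G.Nontrivial) (x : ZMod N) : 0 < G.gap x ∧ x + G.gap x ∈ G := by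
  obtain ⟨y, hy, hyx⟩ := hG.exists_ne x
  exact Nat.sInf_mem (s := {m : ℕ | 0 < m ∧ x + m ∈ G})
    ⟨(y - x).val, ZMod.val_pos.mpr (sub_ne_zero.mpr hyx), by rwa [ZMod.add_val_sub]⟩

theorem gap_le {x y : ZMod N} (hy : y ∈ G) (hyx : y ≠ x) : G.gap x ≤ (y - x).val :=
  Nat.sInf_le (s := {m : ℕ | 0 < m ∧ x + m ∈ G})
    ⟨ZMod.val_pos.mpr (sub_ne_zero.mpr hyx), by rwa [ZMod.add_val_sub]⟩

theorem gap_lt (hG : G.Nontrivial) (x : ZMod N) : G.gap x < N := by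
  obtain ⟨y, hy, hyx⟩ := hG.exists_ne x
  exact (gap_le hy hyx).trans_lt (ZMod.val_lt _)

theorem val_add_gap_sub (hG : G.Nontrivial) (x : ZMod N) : (x + G.gap x - x).val = G.gap x := by
  rw [add_sub_cancel_left, ZMod.val_natCast_of_lt (gap_lt hG x)]

theorem not_inArc_add_gap (hG : G.Nontrivial) (x : ZMod N) {z : ZMod N} (hz : z ∈ G) :
    ¬ InArc N x (x + G.gap x) z := by
  rintro ⟨h₀, h⟩
  rw [val_add_gap_sub hG] at h
  refine (gap_le hz ?_).not_gt h
  rintro rfl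
  simp at h₀

noncomputable def gapArc (G : Finset (ZMod N)) (x : ZMod N) : Finset (ZMod N) :=
  (range (G.gap x)).image fun m : ℕ => x + (m : ZMod N)

theorem mem_gapArc (hG : G.Nontrivial) {x z : ZMod N} : z ∈ G.gapArc x ↔ (z - x).val < G.gap x := by
  simp only [gapArc, mem_image, mem_range]
  constructor
  · rintro ⟨m, hm, rfl⟩
    rwa [add_sub_cancel_left, ZMod.val_natCast_of_lt (hm.trans (gap_lt hG x))]
  · exact fun h => ⟨_, h, ZMod.add_val_sub z x⟩

theorem card_gapArc (hG : G.Nontrivial) (x : ZMod N) : (G.gapArc x).card = G.gap x := by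
  refine (card_image_of_injOn fun m hm m' hm' h => ?_).trans (card_range _)
  have hlt := gap_lt hG x
  simp only [coe_range, Set.mem_Iio] at hm hm'
  simpa [ZMod.val_natCast_of_lt (hm.trans hlt), ZMod.val_natCast_of_lt (hm'.trans hlt)]
    using congrArg ZMod.val (add_left_cancel h)

theorem pairwiseDisjoint_gapArc (hG : G.Nontrivial) :
    (G : Set (ZMod N)).PairwiseDisjoint G.gapArc := by
  intro x hx x' hx' hne
  refine disjoint_left.mpr fun z hz hz' => ?_
  rw [mem_gapArc hG] at hz hz'
  have h₁ := gap_le hx' hne.symm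
  have h₂ := gap_le hx hne
  have hcomm := ZMod.val_sub_comm hne
  have := (x' - x).val_lt
  have hsum := ZMod.val_add (z - x) (x - x')
  rw [sub_add_sub_cancel, Nat.mod_eq_of_lt (by omega)] at hsum
  omega

/-- Every corner lies in the arc of the closest element of `G` before it. -/
theorem biUnion_gapArc (hG : G.Nontrivial) : G.biUnion G.gapArc = univ := by
  refine eq_univ_of_forall fun z => mem_biUnion.mpr ?_
  obtain ⟨x, hx, hmin⟩ := G.exists_min_image (fun y => (z - y).val) hG.nonempty
  refine ⟨x, hx, (mem_gapArc hG).mpr (not_le.mp fun hle => ?_)⟩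
  have hv : (G.gap x : ZMod N).val = G.gap x := ZMod.val_natCast_of_lt (gap_lt hG x)
  have hnext := hmin _ (gap_spec hG x).2
  rw [sub_add_eq_sub_sub, ZMod.val_sub (a := z - x) (by rwa [hv]), hv] at hnext
  have := (gap_spec hG x).1
  omega

theorem sum_gap (hG : G.Nontrivial) : ∑ x ∈ G, G.gap x = N := by
  calc ∑ x ∈ G, G.gap x = ∑ x ∈ G, (G.gapArc x).card :=
        sum_congr rfl fun x _ => (card_gapArc hG x).symm
    _ = (G.biUnion G.gapArc).card := (card_biUnion (pairwiseDisjoint_gapArc hG)).symm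
    _ = N := by rw [biUnion_gapArc hG, card_univ, ZMod.card]

end Finset

/-- Translation by `k` splits an invariant finite set into orbits of size `addOrderOf k`, on each
of which an invariant weight is constant. -/
theorem addOrderOf_dvd_sum_of_add_mem {M : Type*} [AddGroup M] [DecidableEq M] {k : M}
    (hk : IsOfFinAddOrder k) {q : M → ℕ} (hq : ∀ x, q (x + k) = q x) (S : Finset M)
    (hS : ∀ x ∈ S, x + k ∈ S) : addOrderOf k ∣ ∑ x ∈ S, q x := by
  induction S using Finset.strongInduction with
  | H S ih =>
  obtain rfl | ⟨x, hx⟩ := S.eq_empty_or_nonempty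
  · simp
  set r := addOrderOf k
  have orbit (j : ℕ) : x + j • k ∈ S ∧ q (x + j • k) = q x := by
    induction j with
    | zero => simpa
    | succ j ih => rw [succ_nsmul, ← add_assoc]; exact ⟨hS _ ih.1, (hq _).trans ih.2⟩
  set O := (Finset.range r).image fun j => x + j • k
  have hOS : O ⊆ S := fun y hy => by
    obtain ⟨j, -, rfl⟩ := Finset.mem_image.mp hy
    exact (orbit j).1
  have hsumO : ∑ y ∈ O, q y = r * q x := by
    rw [Finset.sum_image fun i hi j hj h => nsmul_injOn_Iio_addOrderOf (by simpa using hi)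
      (by simpa using hj) (add_left_cancel h)]
    simp [orbit]
  have hrest : ∀ y ∈ S \ O, y + k ∈ S \ O := by
    intro y hy
    rw [Finset.mem_sdiff] at hy ⊢
    refine ⟨hS y hy.1, fun hyk => hy.2 ?_⟩
    obtain ⟨j, -, hj⟩ := Finset.mem_image.mp hyk
    have hr : (r - 1) • k = -k := by
      rw [eq_neg_iff_add_eq_zero, ← succ_nsmul, Nat.sub_add_cancel hk.addOrderOf_pos,
        addOrderOf_nsmul_eq_zero]
    refine Finset.mem_image.mpr ⟨(j + (r - 1)) % r, Finset.mem_range.mpr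
      (Nat.mod_lt _ hk.addOrderOf_pos), ?_⟩
    rw [mod_addOrderOf_nsmul, add_nsmul, hr, ← add_assoc, hj, add_neg_cancel_right]
  have hxO : x ∈ O := Finset.mem_image.mpr ⟨0, Finset.mem_range.mpr hk.addOrderOf_pos, by simp⟩
  rw [← Finset.sum_sdiff hOS, hsumO]
  exact dvd_add (ih _ (Finset.sdiff_ssubset hOS ⟨x, hxO⟩) hrest) (dvd_mul_right _ _)

section Forward

variable {d N : ℕ} {T : Set (Sym2 (ZMod N))} {G : Finset (ZMod N)}

theorem IsAngle.nontrivial (hd : 2 ≤ d) (hG : IsAngle d N T G) : G.Nontrivial :=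
  Finset.one_lt_card_iff_nontrivial.mp (by rw [hG.1]; omega)

variable [NeZero N]

theorem IsAngle.dvd_gap_sub_one (hN : (d - 1) ∣ N - 2) (hT : ∀ p ∈ T, IsDiag d N p)
    (hG : IsAngle d N T G) (hG₂ : G.Nontrivial) {x : ZMod N} (hx : x ∈ G) :
    (d - 1) ∣ G.gap x - 1 := by
  have hne : x + G.gap x ≠ x := fun h =>
    (Finset.gap_spec hG₂ x).1.ne' (by simpa [h] using (Finset.val_add_gap_sub hG₂ x).symm)
  rcases hG.2 x _ hx (Finset.gap_spec hG₂ x).2 hne.symm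
      (fun z hz => Finset.not_inArc_add_gap hG₂ x hz) with h | h
  · rw [Finset.val_add_gap_sub hG₂] at h
    simp [h]
  · have := ((isDiag_mk_iff hN).mp (hT _ h)).2.2
    rwa [Finset.val_add_gap_sub hG₂] at this

theorem IsAngle.dvd_mul_of_image_sub_eq {ℓ : ℕ} (hd : 2 ≤ d) (hN : N = (d - 1) * ℓ + 2)
    (hT : ∀ p ∈ T, IsDiag d N p) (hG : IsAngle d N T G) (k : ℕ)
    (hGk : G.image (fun x => x - (k : ZMod N)) = G) : N ∣ k * (ℓ - 1) := by
  have hG₂ := hG.nontrivial hd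
  have hinv (y : ZMod N) : y + -(k : ZMod N) ∈ G ↔ y ∈ G := by
    rw [← sub_eq_add_neg]
    constructor
    · intro h
      obtain ⟨w, hw, hwy⟩ := Finset.mem_image.mp (hGk.symm ▸ h : y - k ∈ G.image _)
      rwa [← sub_left_injective hwy]
    · intro h
      exact hGk ▸ Finset.mem_image_of_mem _ h
  let q x := (G.gap x - 1) / (d - 1)
  have hdvd (x) (hx : x ∈ G) : (d - 1) ∣ G.gap x - 1 :=
    hG.dvd_gap_sub_one ⟨ℓ, by omega⟩ hT hG₂ hx
  have hsum : ∑ x ∈ G, q x = ℓ - 1 := by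
    have h₁ : (d - 1) * ∑ x ∈ G, q x = ∑ x ∈ G, (G.gap x - 1) := by
      rw [Finset.mul_sum]
      exact Finset.sum_congr rfl fun x hx => Nat.mul_div_cancel' (hdvd x hx)
    have h₂ : ∑ x ∈ G, (G.gap x - 1) + G.card = N := by
      refine Eq.trans ?_ (Finset.sum_gap hG₂)
      rw [Finset.card_eq_sum_ones, ← Finset.sum_add_distrib]
      exact Finset.sum_congr rfl fun x _ => Nat.sub_add_cancel (Finset.gap_spec hG₂ x).1
    rw [hG.1, ← h₁] at h₂
    have : (d - 1) * (∑ x ∈ G, q x + 1) = (d - 1) * ℓ := by rw [mul_add]; omega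
    have := Nat.eq_of_mul_eq_mul_left (by omega) this
    omega
  rw [← addOrderOf_natCast_dvd_iff, ← addOrderOf_neg, ← hsum]
  exact addOrderOf_dvd_sum_of_add_mem (isOfFinAddOrder_of_finite _)
    (fun x => by simp only [q, Finset.gap_add hinv]) G fun x hx => (hinv x).mpr hx

end Forward

section Fan

theorem exists_fan_length_mem_Ioo {d q lo hi : ℕ} (hd : 2 ≤ d) (hlo : 1 ≤ lo) (hgap : lo + d ≤ hi)
    (hhi : hi ≤ (d - 1) * q + 1) :
    ∃ t ∈ Finset.Icc 1 q, lo < (d - 1) * t + 1 ∧ (d - 1) * t + 1 < hi := by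
  have hdiv := Nat.div_add_mod (lo - 1) (d - 1)
  have hmod := Nat.mod_lt (lo - 1) (by omega : 0 < d - 1)
  set t := (lo - 1) / (d - 1) + 1
  have ht : (d - 1) * t = (d - 1) * ((lo - 1) / (d - 1)) + (d - 1) := by rw [mul_add, mul_one]
  refine ⟨t, Finset.mem_Icc.mpr ⟨Nat.le_add_left 1 _, ?_⟩, by omega, by omega⟩
  exact (Nat.lt_of_mul_lt_mul_left (a := d - 1) (by omega)).le

variable {N d q : ℕ} [NeZero N] {S : Set (Sym2 (ZMod N))}

/-- A diagonal has length at least `d`, so it does not fit between two consecutive diagonals of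
the fan at `a`, whose far endpoints are `d − 1` apart. -/
theorem eq_fan_of_not_crosses (hS : ∀ p ∈ S, ∀ p' ∈ S, ¬ Crosses N p p') (hd : 2 ≤ d)
    (hqN : (d - 1) * q + 1 < N) {a : ZMod N}
    (hfan : ∀ t ∈ Finset.Icc 1 q, s(a, a + ((d - 1) * t + 1 : ℕ)) ∈ S) {x y : ZMod N}
    (hxy : s(x, y) ∈ S) (hlen : IsDiagLength d N (y - x).val)
    (hlen' : IsDiagLength d N (x - y).val) (hx : 0 < (x - a).val)
    (hxq : (x - a).val < (d - 1) * q + 1) :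
    ∃ t ∈ Finset.Icc 1 q, s(x, y) = s(a, a + ((d - 1) * t + 1 : ℕ)) := by
  have hq : 1 ≤ q := Nat.pos_of_ne_zero (by rintro rfl; omega)
  have hM (t : ℕ) (ht : t ∈ Finset.Icc 1 q) : (d - 1) * t + 1 < N := by
    have := Nat.mul_le_mul_left (d - 1) (Finset.mem_Icc.mp ht).2
    omega
  obtain hy | hy := Nat.eq_zero_or_pos (y - a).val
  · obtain rfl : y = a := sub_eq_zero.mp ((ZMod.val_eq_zero _).mp hy)
    obtain ⟨h₂, -, e, he⟩ := hlen'
    refine ⟨e, Finset.mem_Icc.mpr ⟨Nat.pos_of_ne_zero ?_, ?_⟩, ?_⟩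
    · rintro rfl
      omega
    · exact (Nat.lt_of_mul_lt_mul_left (a := d - 1) (by omega)).le
    · rw [Sym2.eq_swap, ← he, Nat.sub_add_cancel (by omega), ZMod.add_val_sub]
  exfalso
  have hyq : (y - a).val ≤ (d - 1) * q + 1 := not_lt.mp fun h =>
    hS _ (hfan q (Finset.mem_Icc.mpr ⟨hq, le_rfl⟩)) _ hxy (crosses_mk_add hqN hx hxq h)
  rcases lt_trichotomy (x - a).val (y - a).val with h | h | h
  · have hlen_le := hlen.le
    rw [ZMod.val_sub_sub h.le] at hlen_le
    obtain ⟨t, ht, h₁, h₂⟩ := exists_fan_length_mem_Ioo hd hx (by omega) hyq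
    exact hS _ (hfan t ht) _ hxy (crosses_mk_add (hM t ht) hx h₁ h₂)
  · obtain rfl : x = y := sub_left_injective (ZMod.val_injective N h)
    simpa using hlen.1
  · have hlen_le := hlen'.le
    rw [ZMod.val_sub_sub h.le] at hlen_le
    obtain ⟨t, ht, h₁, h₂⟩ := exists_fan_length_mem_Ioo hd hy (by omega) hxq.le
    rw [Sym2.eq_swap] at hxy
    exact hS _ (hfan t ht) _ hxy (crosses_mk_add (hM t ht) hy h₁ h₂)

end Fan

def centralAngle (N c s : ℕ) [NeZero N] : Finset (ZMod N) :=
  {x | x.val % c < s}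

@[simp]
theorem mem_centralAngle {N c s : ℕ} [NeZero N] {x : ZMod N} :
    x ∈ centralAngle N c s ↔ x.val % c < s := by
  simp [centralAngle]

def fanDiagonals (N c s d q : ℕ) : Set (Sym2 (ZMod N)) :=
  {p | ∃ a : ZMod N, a.val % c = s - 1 ∧ ∃ t ∈ Finset.Icc 1 q, p = s(a, a + ((d - 1) * t + 1 : ℕ))}

structure FanConfig (N c r s q d : ℕ) : Prop where
  two_le_d : 2 ≤ d
  one_le_s : 1 ≤ s
  one_le_q : 1 ≤ q
  r_mul_s : r * s = d + 1
  c_eq : c = s + (d - 1) * q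
  N_eq : N = r * c

namespace FanConfig

variable {N c r s q d : ℕ} (H : FanConfig N c r s q d)

include H

theorem block_dvd : c ∣ N := ⟨r, by rw [H.N_eq, mul_comm]⟩

theorem one_le_r : 1 ≤ r :=
  Nat.pos_of_ne_zero fun h => by simpa [h] using H.r_mul_s

theorem two_le_fan_length : 2 ≤ (d - 1) * q + 1 := by
  have := Nat.mul_le_mul (Nat.sub_le_sub_right H.two_le_d 1) H.one_le_q
  omega

theorem c_eq_add : c = s - 1 + ((d - 1) * q + 1) := by
  have := H.c_eq; have := H.one_le_s; omega

theorem fan_length_add_two_le : (d - 1) * q + 1 + 2 ≤ N := by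
  have hc := H.c_eq_add
  have := H.two_le_fan_length
  rcases Nat.lt_or_ge r 2 with hr | hr
  · obtain rfl : r = 1 := by have := H.one_le_r; omega
    have := H.r_mul_s; have := H.two_le_d; have := H.N_eq
    omega
  · have := Nat.mul_le_mul_right c hr
    have := H.N_eq
    omega

theorem sub_one_dvd : (d - 1) ∣ N - 2 := by
  refine ⟨1 + r * q, ?_⟩
  have h : N = r * s + (d - 1) * (r * q) := by rw [H.N_eq, H.c_eq]; ring
  have := H.r_mul_s
  have := H.two_le_d
  rw [mul_add, mul_one]
  omega

theorem val_fan_length (t : ℕ) (ht : t ≤ q) :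
    (((d - 1) * t + 1 : ℕ) : ZMod N).val = (d - 1) * t + 1 := by
  have := Nat.mul_le_mul_left (d - 1) ht
  have := H.fan_length_add_two_le
  exact ZMod.val_natCast_of_lt (by omega)

theorem isDiag {p : Sym2 (ZMod N)} (hp : p ∈ fanDiagonals N c s d q) : IsDiag d N p := by
  obtain ⟨a, -, t, ht, rfl⟩ := hp
  rw [Finset.mem_Icc] at ht
  refine ⟨a, _, rfl, ?_⟩
  rw [add_sub_cancel_left, H.val_fan_length t ht.2]
  have := Nat.mul_le_mul_left (d - 1) ht.1
  have := Nat.mul_le_mul_left (d - 1) ht.2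
  have := H.fan_length_add_two_le
  have := H.two_le_d
  exact ⟨by omega, by omega, by simp⟩

/-- Two central corners `γ` central corners apart are `γ` plus a multiple of `d − 1` corners apart,
and `1 ≤ γ ≤ d`; so for a diagonal `γ ∈ {1, d}`: the corners are cyclically consecutive. -/
theorem central_diagonal_cases {X Y b₁ b₂ j₁ j₂ : ℕ} (hX : X = c * b₁ + j₁) (hY : Y = c * b₂ + j₂)
    (hj₁ : j₁ < s) (hj₂ : j₂ < s) (hb₂ : b₂ < r) (hXY : X < Y) (hlen : IsDiagLength d N (Y - X)) :
    (j₁ = s - 1 ∧ Y = X + ((d - 1) * q + 1)) ∨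
      (j₂ = s - 1 ∧ X = 0 ∧ Y + ((d - 1) * q + 1) = N) := by
  have hd := H.two_le_d
  have hs := H.one_le_s
  have hc := H.c_eq
  obtain ⟨B, rfl⟩ : ∃ B, b₂ = b₁ + B := ⟨b₂ - b₁, by
    by_contra h
    have := Nat.mul_le_mul_left c (show b₂ + 1 ≤ b₁ by omega)
    rw [mul_add, mul_one] at this
    omega⟩
  have hcB : c * (b₁ + B) = c * b₁ + (s * B + (d - 1) * (q * B)) := by rw [H.c_eq]; ring
  have hsB : s * B + s ≤ d + 1 := by
    have := Nat.mul_le_mul_left s (show B + 1 ≤ r by omega)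
    rwa [mul_add, mul_one, mul_comm s r, H.r_mul_s] at this
  have hB0 : (B = 0 ∧ s * B = 0 ∧ (d - 1) * (q * B) = 0) ∨ (1 ≤ B ∧ s ≤ s * B) := by
    rcases Nat.eq_zero_or_pos B with rfl | hB
    · simp
    · exact Or.inr ⟨hB, Nat.le_mul_of_pos_right s hB⟩
  obtain ⟨h₂, -, e, he⟩ := hlen
  have hγ : s * B + j₂ - j₁ - 1 = (d - 1) * (e - q * B) := by
    rw [Nat.mul_sub, ← he]
    omega
  obtain h | h : e - q * B = 0 ∨ e - q * B = 1 := by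
    have : (d - 1) * (e - q * B) < (d - 1) * 2 := by omega
    have := Nat.lt_of_mul_lt_mul_left this
    omega
  · rw [h, mul_zero] at hγ
    obtain rfl : B = 1 := Nat.eq_of_mul_eq_mul_left hs (by omega : s * B = s * 1)
    rw [mul_one, mul_one] at hcB
    omega
  · rw [h, mul_one] at hγ
    have hr : B + 1 = r := Nat.eq_of_mul_eq_mul_left hs
      (by rw [mul_add, mul_one, mul_comm s r, H.r_mul_s]; omega : s * (B + 1) = s * r)
    obtain rfl : b₁ = 0 := by omega
    have : N = c * B + c := by rw [H.N_eq, ← hr]; ring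
    simp only [mul_zero, zero_add] at *
    omega

variable [NeZero N]

theorem val_add_mod_of_lt {a : ZMod N} (ha : a.val % c = s - 1) {m : ℕ} (hm : m < (d - 1) * q + 1) :
    (a + m).val % c = s - 1 + m := by
  rw [ZMod.val_add_natCast_mod H.block_dvd, ha, Nat.mod_eq_of_lt (by have := H.c_eq_add; omega)]

theorem val_add_fan_length_mod {a : ZMod N} (ha : a.val % c = s - 1) :
    (a + ((d - 1) * q + 1 : ℕ)).val % c = 0 := by
  rw [ZMod.val_add_natCast_mod H.block_dvd, ha, ← H.c_eq_add, Nat.mod_self]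

theorem val_mod_of_inArc {a z : ZMod N} (ha : a.val % c = s - 1) {t : ℕ} (ht : t ≤ q)
    (hz : InArc N a (a + ((d - 1) * t + 1 : ℕ)) z) :
    0 < (z - a).val ∧ z.val % c = s - 1 + (z - a).val := by
  obtain ⟨h₀, hlt⟩ := hz
  rw [add_sub_cancel_left, H.val_fan_length t ht] at hlt
  have := Nat.mul_le_mul_left (d - 1) ht
  refine ⟨h₀, ?_⟩
  conv_lhs => rw [← ZMod.add_val_sub z a]
  exact H.val_add_mod_of_lt ha (by omega)

theorem not_crosses {p p' : Sym2 (ZMod N)} (hp : p ∈ fanDiagonals N c s d q)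
    (hp' : p' ∈ fanDiagonals N c s d q) : ¬ Crosses N p p' := by
  obtain ⟨a, ha, t, ht, rfl⟩ := hp
  obtain ⟨a', ha', t', ht', rfl⟩ := hp'
  rw [Finset.mem_Icc] at ht ht'
  obtain rfl | hne := eq_or_ne a a'
  · exact not_crosses_of_mem (Sym2.mem_mk_left _ _) (Sym2.mem_mk_left _ _)
  refine not_crosses_of_not_inArc_s11 (fun h => ?_) (fun h => ?_)
  · have := H.val_mod_of_inArc ha ht.2 h
    omega
  · obtain ⟨h₀, hmod⟩ := H.val_mod_of_inArc ha ht.2 h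
    obtain rfl | hlt := eq_or_lt_of_le ht'.2
    · rw [H.val_add_fan_length_mod ha'] at hmod
      omega
    · have := Nat.mul_lt_mul_of_pos_left hlt (by have := H.two_le_d; omega : 0 < d - 1)
      rw [H.val_add_mod_of_lt ha' (by omega), add_right_inj] at hmod
      have heq := ZMod.val_injective N (hmod.symm.trans (H.val_fan_length t' ht'.2).symm)
      rw [add_sub_right_comm, add_eq_right, sub_eq_zero] at heq
      exact hne heq.symm

theorem card_centralAngle : (centralAngle N c s).card = d + 1 := by
  have hsc : s ≤ c := H.c_eq ▸ Nat.le_add_right s _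
  have hc : 0 < c := by have := H.one_le_s; omega
  have hlt {b j : ℕ} (hb : b < r) (hj : j < s) : b * c + j < N := by
    have := Nat.mul_le_mul_right c (Nat.succ_le_of_lt hb)
    rw [H.N_eq]
    rw [Nat.succ_mul] at this
    omega
  suffices (Finset.range r ×ˢ Finset.range s).card = (centralAngle N c s).card by
    rw [← this, Finset.card_product, Finset.card_range, Finset.card_range, H.r_mul_s]
  refine Finset.card_nbij' (fun p => ((p.1 * c + p.2 : ℕ) : ZMod N))
    (fun x => (x.val / c, x.val % c)) ?_ ?_ ?_ ?_
  · rintro ⟨b, j⟩ hp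
    simp only [Finset.coe_product, Finset.coe_range, Set.mem_prod, Set.mem_Iio] at hp
    simp only [centralAngle, Finset.coe_filter, Finset.mem_univ, true_and]
    rw [Set.mem_ofPred_eq, ZMod.val_natCast_of_lt (hlt hp.1 hp.2),
      Nat.mul_add_mod_of_lt (hp.2.trans_le hsc)]
    exact hp.2
  · intro x hx
    simp only [centralAngle, Finset.coe_filter, Finset.mem_univ, true_and, Set.mem_ofPred_eq] at hx
    simp only [Finset.coe_product, Finset.coe_range, Set.mem_prod, Set.mem_Iio]
    refine ⟨(Nat.div_lt_iff_lt_mul hc).mpr ?_, hx⟩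
    rw [← H.N_eq]
    exact x.val_lt
  · rintro ⟨b, j⟩ hp
    simp only [Finset.coe_product, Finset.coe_range, Set.mem_prod, Set.mem_Iio] at hp
    simp only [ZMod.val_natCast_of_lt (hlt hp.1 hp.2), Prod.mk.injEq]
    rw [Nat.mul_add_mod_of_lt (hp.2.trans_le hsc), mul_comm, Nat.mul_add_div hc,
      Nat.div_eq_of_lt (hp.2.trans_le hsc)]
    simp
  · intro x _
    simp only [Nat.div_add_mod', ZMod.natCast_zmod_val]

theorem isAngle : IsAngle d N (fanDiagonals N c s d q) (centralAngle N c s) := by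
  refine ⟨H.card_centralAngle, fun x y hx hy hxy hempty => ?_⟩
  rw [mem_centralAngle] at hx hy
  have hyx : 0 < (y - x).val := ZMod.val_pos.mpr (sub_ne_zero.mpr hxy.symm)
  have := H.fan_length_add_two_le
  rcases Nat.lt_or_ge (x.val % c + 1) s with hs | hs
  · left
    have h₁ : (x + (1 : ℕ) - x).val = 1 := by
      rw [add_sub_cancel_left, ZMod.val_natCast_of_lt (by omega)]
    have hmem : x + (1 : ℕ) ∈ centralAngle N c s := by
      rw [mem_centralAngle, ZMod.val_add_natCast_mod H.block_dvd, Nat.mod_eq_of_lt (by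
        have := H.c_eq; omega)]
      exact hs
    by_contra hne
    exact hempty _ hmem ⟨by omega, by omega⟩
  · right
    have hxs : x.val % c = s - 1 := by omega
    have hM := H.val_fan_length q le_rfl
    have hle : (y - x).val ≤ (d - 1) * q + 1 := by
      refine not_lt.mp fun h => hempty (x + ((d - 1) * q + 1 : ℕ)) ?_ ⟨?_, ?_⟩
      · rw [mem_centralAngle, H.val_add_fan_length_mod hxs]
        exact H.one_le_s
      all_goals rw [add_sub_cancel_left, hM]; omega
    have hge : (d - 1) * q + 1 ≤ (y - x).val := by
      refine not_lt.mp fun h => ?_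
      have := H.val_add_mod_of_lt hxs h
      rw [ZMod.add_val_sub] at this
      omega
    refine ⟨x, hxs, q, Finset.mem_Icc.mpr ⟨H.one_le_q, le_rfl⟩, ?_⟩
    rw [← le_antisymm hle hge, ZMod.add_val_sub]

theorem mem_fanDiagonals_of_central {x y : ZMod N} (hx : x.val % c < s) (hy : y.val % c < s)
    (hxy : x.val < y.val) (hlen : IsDiagLength d N (y - x).val) :
    s(x, y) ∈ fanDiagonals N c s d q := by
  have hc : 0 < c := by have := H.one_le_s; have := H.c_eq; omega
  have hq := Finset.mem_Icc.mpr ⟨H.one_le_q, le_rfl⟩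
  rw [ZMod.val_sub hxy.le] at hlen
  rcases H.central_diagonal_cases (Nat.div_add_mod x.val c).symm (Nat.div_add_mod y.val c).symm
    hx hy ((Nat.div_lt_iff_lt_mul hc).mpr (H.N_eq ▸ y.val_lt)) hxy hlen with
    ⟨hj, hY⟩ | ⟨hj, hX, hY⟩
  · refine ⟨x, hj, q, hq, ?_⟩
    rw [← ZMod.add_val_sub y x, ZMod.val_sub hxy.le, hY, Nat.add_sub_cancel_left]
  · refine ⟨y, hj, q, hq, ?_⟩
    rw [Sym2.eq_swap, (ZMod.val_eq_zero x).mp hX, ← ZMod.natCast_zmod_val y, ← Nat.cast_add, hY,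
      ZMod.natCast_self]

theorem exists_fanCenter {x : ZMod N} (hx : s ≤ x.val % c) :
    ∃ a : ZMod N, a.val % c = s - 1 ∧ (x - a).val = x.val % c - (s - 1) := by
  have hxc : x.val % c < c := Nat.mod_lt _ (by have := H.c_eq; have := H.one_le_s; omega)
  have hxN : x.val % c - (s - 1) < N := by have := x.val_lt; have := Nat.mod_le x.val c; omega
  refine ⟨x - (x.val % c - (s - 1) : ℕ), ?_, ?_⟩
  · rw [ZMod.val_sub (by rw [ZMod.val_natCast_of_lt hxN]; have := Nat.mod_le x.val c; omega),
      ZMod.val_natCast_of_lt hxN]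
    have hx' := Nat.div_add_mod x.val c
    rw [show x.val - (x.val % c - (s - 1)) = c * (x.val / c) + (s - 1) by omega,
      Nat.mul_add_mod, Nat.mod_eq_of_lt (by omega)]
  · rw [sub_sub_cancel, ZMod.val_natCast_of_lt hxN]

theorem mem_fanDiagonals_of_not_central {S : Set (Sym2 (ZMod N))}
    (hS : ∀ p ∈ S, ∀ p' ∈ S, ¬ Crosses N p p') (hTS : fanDiagonals N c s d q ⊆ S)
    {x y : ZMod N} (hxy : s(x, y) ∈ S) (hlen : IsDiagLength d N (y - x).val)
    (hlen' : IsDiagLength d N (x - y).val) (hx : s ≤ x.val % c) :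
    s(x, y) ∈ fanDiagonals N c s d q := by
  obtain ⟨a, ha, hxa⟩ := H.exists_fanCenter hx
  have := H.fan_length_add_two_le
  have := H.c_eq_add
  have := H.one_le_s
  have hxc := Nat.mod_lt x.val (show 0 < c by omega)
  obtain ⟨t, ht, heq⟩ := eq_fan_of_not_crosses hS H.two_le_d (by omega)
    (fun t ht => hTS ⟨a, ha, t, ht, rfl⟩) hxy hlen hlen' (by omega) (by omega)
  exact heq ▸ ⟨a, ha, t, ht, rfl⟩

theorem isAngulation : IsAngulation d N (fanDiagonals N c s d q) := by
  refine ⟨fun p hp => H.isDiag hp, fun p hp p' hp' => H.not_crosses hp hp',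
    fun S hSd hS hTS => (Set.Subset.antisymm (fun p hp => ?_) hTS)⟩
  obtain ⟨x, y, rfl, hlen⟩ := hSd _ hp
  have hne : x ≠ y := by rintro rfl; simp at hlen
  have hlen' : IsDiagLength d N (x - y).val := by
    rw [ZMod.val_sub_comm hne]
    exact IsDiagLength.sub H.sub_one_dvd hlen
  by_cases hx : s ≤ x.val % c
  · exact H.mem_fanDiagonals_of_not_central hS hTS hp hlen hlen' hx
  by_cases hy : s ≤ y.val % c
  · rw [Sym2.eq_swap] at hp ⊢
    exact H.mem_fanDiagonals_of_not_central hS hTS hp hlen' hlen hy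
  rcases lt_or_gt_of_ne ((ZMod.val_injective N).ne hne) with h | h
  · exact H.mem_fanDiagonals_of_central (not_le.mp hx) (not_le.mp hy) h hlen
  · rw [Sym2.eq_swap]
    exact H.mem_fanDiagonals_of_central (not_le.mp hy) (not_le.mp hx) h hlen'

end FanConfig

section Rotation

variable {N c s d q k : ℕ} [NeZero N]

theorem image_rot_fanDiagonals (hc : c ∣ N) (hk : c ∣ k) :
    rot N k '' fanDiagonals N c s d q = fanDiagonals N c s d q := by
  ext p
  constructor
  · rintro ⟨_, ⟨a, ha, t, ht, rfl⟩, rfl⟩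
    refine ⟨a - k, by rwa [ZMod.val_sub_natCast_mod hc hk], t, ht, ?_⟩
    rw [rot, Sym2.map_mk, add_sub_right_comm]
  · rintro ⟨a, ha, t, ht, rfl⟩
    refine ⟨_, ⟨a + k, ?_, t, ht, rfl⟩, ?_⟩
    · rwa [← ZMod.val_sub_natCast_mod hc hk, add_sub_cancel_right]
    · rw [rot, Sym2.map_mk, add_sub_cancel_right, add_sub_right_comm, add_sub_cancel_right]

theorem image_sub_centralAngle (hc : c ∣ N) (hk : c ∣ k) :
    (centralAngle N c s).image (fun x => x - (k : ZMod N)) = centralAngle N c s := by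
  ext z
  simp only [Finset.mem_image, mem_centralAngle]
  constructor
  · rintro ⟨x, hx, rfl⟩
    rwa [ZMod.val_sub_natCast_mod hc hk]
  · intro hz
    exact ⟨z + k, by rwa [← ZMod.val_sub_natCast_mod hc hk, add_sub_cancel_right],
      add_sub_cancel_right _ _⟩

end Rotation

theorem exists_isAngulation_isAngle_of_dvd {d ℓ N : ℕ} [NeZero N] (hd : 2 ≤ d) (hl : 2 ≤ ℓ)
    (hN : N = (d - 1) * ℓ + 2) (k : ℕ) (hk : N ∣ k * (ℓ - 1)) :
    ∃ (T : Set (Sym2 (ZMod N))) (G : Finset (ZMod N)), IsAngulation d N T ∧ IsAngle d N T G ∧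
      rot N k '' T = T ∧ G.image (fun x => x - (k : ZMod N)) = G := by
  have hN' := hN.trans (sub_one_mul_add_two_eq (by omega) (by omega))
  set r := addOrderOf (k : ZMod N)
  obtain ⟨c, hc⟩ : r ∣ N := (addOrderOf_natCast_dvd_iff k N).mpr (dvd_mul_left N k)
  obtain ⟨q, hq⟩ : r ∣ ℓ - 1 := (addOrderOf_natCast_dvd_iff k _).mpr hk
  obtain ⟨s, hs⟩ : r ∣ d + 1 := by
    refine (addOrderOf_natCast_dvd_iff k _).mpr ((Nat.dvd_add_right
      (dvd_mul_of_dvd_right hk (d - 1))).mp ⟨k, ?_⟩)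
    rw [hN']
    ring
  have hr : 0 < r := Nat.pos_of_ne_zero fun h => by simp [h] at hs
  have H : FanConfig N c r s q d := by
    refine ⟨hd, Nat.pos_of_ne_zero fun h => ?_, Nat.pos_of_ne_zero fun h => ?_, hs.symm, ?_, hc⟩
    · simp [h] at hs
    · simp [h] at hq
      omega
    · refine Nat.eq_of_mul_eq_mul_left hr ?_
      rw [← hc, hN', hq, hs]
      ring
  have hck : c ∣ k := by
    refine Nat.dvd_of_mul_dvd_mul_left hr ?_
    rw [← hc, mul_comm r k]
    exact (addOrderOf_natCast_dvd_iff k r).mp dvd_rfl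
  exact ⟨_, _, H.isAngulation, H.isAngle, image_rot_fanDiagonals H.block_dvd hck,
    image_sub_centralAngle H.block_dvd hck⟩

theorem invariant_angle_rot_iff_general (d ℓ n N : ℕ) (hd : 2 ≤ d) (hl : 2 ≤ ℓ)
    (hN : N = (d - 1) * ℓ + 2) :
    (∃ (T : Set (Sym2 (ZMod N))) (G : Finset (ZMod N)),
        IsAngulation d N T ∧ IsAngle d N T G ∧
        rot N (n * (d - 1)) '' T = T ∧
        Finset.image (fun x => x - ((n * (d - 1) : ℕ) : ZMod N)) G = G) ↔
      N ∣ n * Nat.gcd (d + 1) (2 * (ℓ - 1)) := by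
  have : NeZero N := ⟨by omega⟩
  rw [← dvd_mul_sub_one_mul_iff (by omega)
    (hN.trans (sub_one_mul_add_two_eq (by omega) (by omega)))]
  constructor
  · rintro ⟨T, G, hT, hG, -, hGk⟩
    exact hG.dvd_mul_of_image_sub_eq hd hN hT.1 _ hGk
  · exact exists_isAngulation_isAngle_of_dvd hd hl hN _

/-- For d >= 2, l >= 2, n >= 1 and N = (d-1)l + 2, there exist a
(d+1)-angulation T of the N-gon and a (d+1)-angle G of T with rho^(n(d-1))(T) = T
and rho^(n(d-1))(G) = G, iff N divides n*gcd(d+1, 2(l-1)). -/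
theorem invariant_angle_rot_iff (d ℓ n N : ℕ) (hd : 2 ≤ d) (hl : 2 ≤ ℓ) (hn : 1 ≤ n)
    (hN : N = (d - 1) * ℓ + 2) :
    (∃ (T : Set (Sym2 (ZMod N))) (G : Finset (ZMod N)),
        IsAngulation d N T ∧ IsAngle d N T G ∧
        rot N (n * (d - 1)) '' T = T ∧
        Finset.image (fun x => x - ((n * (d - 1) : ℕ) : ZMod N)) G = G) ↔
      N ∣ n * Nat.gcd (d + 1) (2 * (ℓ - 1)) :=
  invariant_angle_rot_iff_general d ℓ n N hd hl hN
end

section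
/- Fix integers d ≥ 2, ℓ ≥ 2 and n ≥ 1, and set N = (d−1)ℓ + 2. Suppose N is even and 𝒯 is a (d+1)-angulation of P_N with ρ^{n(d−1)}(𝒯) = 𝒯 that contains a diameter, i.e. a (d−1)-diagonal of the form {x, x + N/2}. Then N divides 2n. -/
/-!
Write `N = 2m`. A diameter `{x, x + m}` and its image `{x - k, x + m - k}` under `ρᵏ` are two
diameters, and two distinct diameters of a polygon always cross; so `ρᵏ` fixes the diameter,
i.e. `m ∣ k = n(d - 1)`. Since the diameter is a `(d-1)`-diagonal, `d - 1 ∣ m - 1`, so `m` is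
coprime to `d - 1` and hence `m ∣ n`.
-/

namespace Angulation

variable {m : ℕ}

theorem val_natCast_half (m : ℕ) : ((m : ZMod (2 * m))).val = m := by
  rw [ZMod.val_natCast]
  rcases m.eq_zero_or_pos with rfl | hm
  · rfl
  · exact Nat.mod_eq_of_lt (by omega)

theorem natCast_half_add_self (m : ℕ) : (m : ZMod (2 * m)) + m = 0 := by
  rw [← Nat.cast_add, ← two_mul, ZMod.natCast_self]

theorem neg_natCast_half (m : ℕ) : -(m : ZMod (2 * m)) = m :=
  neg_eq_of_add_eq_zero_left (natCast_half_add_self m)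

theorem two_le_and_dvd_of_isDiag_diameter {d : ℕ} {x : ZMod (2 * m)}
    (h : IsDiag d (2 * m) s(x, x + m)) : 2 ≤ m ∧ d - 1 ∣ m - 1 := by
  obtain ⟨a, b, hab, h2, -, hdvd⟩ := h
  have hba : b - a = m := by
    rcases Sym2.eq_iff.mp hab with ⟨rfl, rfl⟩ | ⟨rfl, rfl⟩
    · ring
    · rw [sub_add_cancel_left, neg_natCast_half]
  rw [hba, val_natCast_half] at h2 hdvd
  exact ⟨h2, hdvd⟩

theorem crosses_diameter_of_val_lt {x t : ZMod (2 * m)} (ht₀ : 0 < t.val) (htm : t.val < m) :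
    Crosses (2 * m) s(x, x + m) s(x + t, x + m + t) := by
  refine ⟨x, x + m, x + t, x + m + t, rfl, rfl, ?_, ?_⟩ <;>
    simp only [InArc, add_sub_cancel_left, sub_add_cancel_left, neg_natCast_half,
      val_natCast_half] <;>
    exact ⟨ht₀, htm⟩

/-- Two distinct diameters cross; `2 * t = 0` says the two diameters coincide. -/
theorem two_mul_eq_zero_of_not_crosses_diameter (hm : 0 < m) {x t : ZMod (2 * m)}
    (h : ¬ Crosses (2 * m) s(x, x + m) s(x + t, x + m + t)) : 2 * t = 0 := by
  have : NeZero (2 * m) := ⟨by omega⟩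
  rcases lt_trichotomy t.val m with htm | htm | htm
  · rcases Nat.eq_zero_or_pos t.val with ht₀ | ht₀
    · rw [(ZMod.val_eq_zero t).mp ht₀, mul_zero]
    · exact absurd (crosses_diameter_of_val_lt ht₀ htm) h
  · rw [← ZMod.natCast_zmod_val t, htm]
    exact (two_mul _).trans (natCast_half_add_self m)
  · -- `{x + t, x + m + t}` is also the diameter `{x + u, x + m + u}` with `u = t + m`.
    have hu : (t + m).val = t.val - m := by
      rw [ZMod.val_add_of_le (by rw [val_natCast_half]; omega), val_natCast_half]; omega
    have hpair : s(x + t, x + m + t) = s(x + (t + m), x + m + (t + m)) := by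
      rw [Sym2.eq_swap, show x + m + (t + m) = x + t + (m + m) by ring,
        natCast_half_add_self, add_zero, add_right_comm, add_assoc]
    have := ZMod.val_lt t
    exact absurd (hpair ▸ crosses_diameter_of_val_lt (by omega) (by omega)) h

theorem dvd_of_not_crosses_rot_diameter (hm : 0 < m) {x : ZMod (2 * m)} {k : ℕ}
    (h : ¬ Crosses (2 * m) s(x, x + m) (rot (2 * m) k s(x, x + m))) : m ∣ k := by
  simp only [rot, Sym2.map_mk, sub_eq_add_neg] at h
  have h2k : ((2 * k : ℕ) : ZMod (2 * m)) = 0 := by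
    push_cast
    have h2 := two_mul_eq_zero_of_not_crosses_diameter hm h
    rwa [mul_neg, neg_eq_zero] at h2
  rw [ZMod.natCast_eq_zero_iff] at h2k
  exact Nat.dvd_of_mul_dvd_mul_left two_pos h2k

theorem coprime_of_dvd_sub_one {a b : ℕ} (ha : 1 ≤ a) (h : b ∣ a - 1) : a.Coprime b :=
  Nat.Coprime.coprime_dvd_right h ((Nat.coprime_self_sub_right ha).mpr (Nat.coprime_one_right a))

end Angulation

open Angulation in
theorem N_dvd_of_invariant_diameter_general (d n N : ℕ) (hNe : Even N)
    (T : Set (Sym2 (ZMod N))) (hT : IsAngulation d N T)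
    (hinv : rot N (n * (d - 1)) '' T = T)
    (hdiam : ∃ x : ZMod N, s(x, x + ((N / 2 : ℕ) : ZMod N)) ∈ T) :
    N ∣ 2 * n := by
  obtain ⟨m, rfl⟩ := hNe.two_dvd
  rw [Nat.mul_div_cancel_left m two_pos] at hdiam
  obtain ⟨x, hx⟩ := hdiam
  obtain ⟨hm, hdvd⟩ := two_le_and_dvd_of_isDiag_diameter (hT.1 _ hx)
  have hrot : rot (2 * m) (n * (d - 1)) s(x, x + m) ∈ T := hinv ▸ Set.mem_image_of_mem _ hx
  have hk : m ∣ n * (d - 1) := dvd_of_not_crosses_rot_diameter (by omega) (hT.2.1 _ hx _ hrot)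
  exact mul_dvd_mul_left 2 ((coprime_of_dvd_sub_one (by omega) hdvd).dvd_of_dvd_mul_right hk)

/-- For d >= 2, l >= 2, n >= 1 and N = (d-1)l + 2 even, if T is a
(d+1)-angulation of the N-gon with rho^(n(d-1))(T) = T containing a diameter
{x, x + N/2}, then N divides 2n. -/
theorem N_dvd_of_invariant_diameter (d ℓ n N : ℕ) (hd : 2 ≤ d) (hl : 2 ≤ ℓ) (hn : 1 ≤ n)
    (hN : N = (d - 1) * ℓ + 2) (hNe : Even N)
    (T : Set (Sym2 (ZMod N))) (hT : IsAngulation d N T)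
    (hinv : rot N (n * (d - 1)) '' T = T)
    (hdiam : ∃ x : ZMod N, s(x, x + ((N / 2 : ℕ) : ZMod N)) ∈ T) :
    N ∣ 2 * n :=
  N_dvd_of_invariant_diameter_general d n N hNe T hT hinv hdiam
end
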